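/- arXiv:1904.00186 — 4 statements merged into one kernel-verified Lean document; each statement's English description precedes it below -/
import Mathlib

section
/- (Theorem 3, perturbation of C₀ along the unit arc) Let 0 < θ ≤ π/3 and 0 < θ + τ ≤ π/3. Let K be the triangle with vertices (0,0), (1,0), (cos θ, sin θ) and K̃ the triangle with vertices (0,0), (1,0), (cos(θ+τ), sin(θ+τ)). Suppose C ≥ 0 satisfies ‖v‖_K ≤ C·‖D²v‖_K for all v ∈ V_FM(K). If τ < 0, then ‖ṽ‖_{K̃} ≤ (cos²((θ+τ)/2)/cos²(θ/2))·C·‖D²ṽ‖_{K̃} for all ṽ ∈ V_FM(K̃); if τ > 0, then ‖ṽ‖_{K̃} ≤ (sin²((θ+τ)/2)/sin²(θ/2))·C·‖D²ṽ‖_{K̃} for all ṽ ∈ V_FM(K̃). -/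
open MeasureTheory Real

noncomputable section

/-- Points of the plane. -/
abbrev Pt : Type := ℝ × ℝ

/-- The closed triangle with vertices `O`, `A`, `B`. -/
def Tri (O A B : Pt) : Set Pt := convexHull ℝ {O, A, B}

/-- The triangle with vertices `O`, `A`, `B` is nondegenerate. -/
def Nondeg (O A B : Pt) : Prop := ¬ Collinear ℝ ({O, A, B} : Set Pt)

/-- Euclidean length of a vector of the plane. -/
def elen (v : Pt) : ℝ := Real.sqrt (v.1 ^ 2 + v.2 ^ 2)

/-- Partial derivative in the `x` direction. -/
def pdx (u : Pt → ℝ) (p : Pt) : ℝ := fderiv ℝ u p (1, 0)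

/-- Partial derivative in the `y` direction. -/
def pdy (u : Pt → ℝ) (p : Pt) : ℝ := fderiv ℝ u p (0, 1)

/-- `‖u‖_K²  = ∫_K u² dxdy`. -/
def l2sq (u : Pt → ℝ) (K : Set Pt) : ℝ := ∫ p in K, (u p) ^ 2

/-- `‖∇u‖_K² = ∫_K (u_x² + u_y²) dxdy`. -/
def h1sq (u : Pt → ℝ) (K : Set Pt) : ℝ := ∫ p in K, ((pdx u p) ^ 2 + (pdy u p) ^ 2)

/-- `‖D²u‖_K² = ∫_K (u_xx² + u_xy² + u_yx² + u_yy²) dxdy`. -/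
def h2sq (u : Pt → ℝ) (K : Set Pt) : ℝ :=
  ∫ p in K, ((pdx (pdx u) p) ^ 2 + (pdy (pdx u) p) ^ 2
    + (pdx (pdy u) p) ^ 2 + (pdy (pdy u) p) ^ 2)

/-- `‖u‖_K`. -/
def l2norm (u : Pt → ℝ) (K : Set Pt) : ℝ := Real.sqrt (l2sq u K)

/-- `‖∇u‖_K`. -/
def h1norm (u : Pt → ℝ) (K : Set Pt) : ℝ := Real.sqrt (h1sq u K)

/-- `‖D²u‖_K`. -/
def h2norm (u : Pt → ℝ) (K : Set Pt) : ℝ := Real.sqrt (h2sq u K)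

/-- `u` is twice continuously differentiable on an open neighborhood of `K`. -/
def Smooth2 (u : Pt → ℝ) (K : Set Pt) : Prop :=
  ∃ U : Set Pt, IsOpen U ∧ K ⊆ U ∧ ContDiffOn ℝ 2 u U

/-- `w` is continuously differentiable on an open neighborhood of `K`. -/
def Smooth1 (w : Pt → ℝ) (K : Set Pt) : Prop :=
  ∃ U : Set Pt, IsOpen U ∧ K ⊆ U ∧ ContDiffOn ℝ 1 w U

/-- Line integral of `g` along the edge from `P` to `Q`:
`∫_e g ds = |Q − P| ∫₀¹ g(P + t(Q−P)) dt`. -/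
def edgeInt (g : Pt → ℝ) (P Q : Pt) : ℝ :=
  elen (Q - P) * ∫ t in (0:ℝ)..1, g (P + t • (Q - P))

/-- Outward unit normal of the edge from `P` to `Q` of the triangle whose third vertex is `R`
(the unit vector perpendicular to `Q − P` pointing away from `R`). -/
def outNormal (P Q R : Pt) : Pt :=
  (if (Q - P).2 * (R - P).1 - (Q - P).1 * (R - P).2 ≤ 0 then (elen (Q - P))⁻¹
    else -(elen (Q - P))⁻¹) • ((Q - P).2, -((Q - P).1))

/-- The normal derivative `∂u/∂n = ∇u ⋅ n` along the edge from `P` to `Q`,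
with `n` the outward normal (w.r.t. third vertex `R`). -/
def normalDeriv (u : Pt → ℝ) (P Q R : Pt) (p : Pt) : ℝ := fderiv ℝ u p (outNormal P Q R)

/-- `u ∈ V_FM(K)` for the triangle `K` with vertices `O`, `A`, `B`: `u` is C² near `K`,
vanishes at the three vertices, and has vanishing mean normal derivative on each edge. -/
def MemVFM (u : Pt → ℝ) (O A B : Pt) : Prop :=
  Smooth2 u (Tri O A B) ∧ u O = 0 ∧ u A = 0 ∧ u B = 0 ∧
  edgeInt (normalDeriv u O A B) O A = 0 ∧
  edgeInt (normalDeriv u A B O) A B = 0 ∧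
  edgeInt (normalDeriv u B O A) B O = 0

/-- `w ∈ V_CR(K)` for the triangle `K` with vertices `O`, `A`, `B`: `w` is C¹ near `K`
and has vanishing mean value on each edge. -/
def MemVCR (w : Pt → ℝ) (O A B : Pt) : Prop :=
  Smooth1 w (Tri O A B) ∧
  edgeInt w O A = 0 ∧ edgeInt w A B = 0 ∧ edgeInt w B O = 0

/-- The longest edge length of the triangle with vertices `O`, `A`, `B`. -/
def longestEdge (O A B : Pt) : ℝ := max (elen (A - O)) (max (elen (B - A)) (elen (O - B)))

/-- The linear map with matrix `[[1, α], [0, β]]`. -/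
def Qmap (α β : ℝ) (p : Pt) : Pt := (p.1 + α * p.2, β * p.2)

/-- The inverse of `Qmap α β` (for `β ≠ 0`). -/
def Qinv (α β : ℝ) (p : Pt) : Pt := (p.1 - (α / β) * p.2, p.2 / β)



def Lc (α β : ℝ) : Pt →L[ℝ] Pt :=
  ((ContinuousLinearMap.fst ℝ ℝ ℝ) + α • (ContinuousLinearMap.snd ℝ ℝ ℝ)).prod
    (β • (ContinuousLinearMap.snd ℝ ℝ ℝ))

lemma Lc_apply (α β : ℝ) (p : Pt) : Lc α β p = (p.1 + α * p.2, β * p.2) := rfl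

lemma Lc_det (α β : ℝ) : LinearMap.det ((Lc α β) : Pt →ₗ[ℝ] Pt) = β := by
  rw [← LinearMap.det_toMatrix (Module.Basis.finTwoProd ℝ), Matrix.det_fin_two]
  simp [LinearMap.toMatrix_apply, Lc_apply, Module.Basis.finTwoProd_zero, Module.Basis.finTwoProd_one]

lemma Lc_inj (α β : ℝ) (hβ : 0 < β) : Function.Injective (Lc α β) := by
  intro p q h
  simp only [Lc_apply, Prod.mk.injEq] at h
  have h2 : p.2 = q.2 := by
    have := h.2
    rcases mul_left_cancel₀ hβ.ne' this with h; exact h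
  have h1 : p.1 = q.1 := by have := h.1; rw [h2] at this; linarith
  exact Prod.ext h1 h2

lemma cov (α β : ℝ) (hβ : 0 < β) (K : Set Pt) (hK : MeasurableSet K) (g : Pt → ℝ) :
    ∫ p in (Lc α β) '' K, g p = β * ∫ p in K, g (Lc α β p) := by
  rw [integral_image_eq_integral_abs_det_fderiv_smul volume hK
      (fun x _ => (Lc α β).hasFDerivAt.hasFDerivWithinAt) ((Lc_inj α β hβ).injOn) g]
  simp only [ContinuousLinearMap.det, Lc_det, abs_of_pos hβ, smul_eq_mul]
  exact MeasureTheory.integral_const_mul β _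

lemma clm_decomp (f : Pt →L[ℝ] ℝ) (v : Pt) : f v = v.1 * f (1,0) + v.2 * f (0,1) := by
  have hv : v = v.1 • ((1,0) : Pt) + v.2 • ((0,1) : Pt) := by
    apply Prod.ext <;> simp
  rw [hv, map_add, f.map_smul, f.map_smul, smul_eq_mul, smul_eq_mul]
  simp

lemma pdx_contDiffOn {u : Pt → ℝ} {U : Set Pt} (hU : IsOpen U) (hu : ContDiffOn ℝ 2 u U) :
    ContDiffOn ℝ 1 (pdx u) U := by
  have h := hu.fderiv_of_isOpen (m := 1) hU (by norm_num)
  exact (ContinuousLinearMap.apply ℝ ℝ ((1,0) : Pt)).contDiff.comp_contDiffOn h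

lemma pdy_contDiffOn {u : Pt → ℝ} {U : Set Pt} (hU : IsOpen U) (hu : ContDiffOn ℝ 2 u U) :
    ContDiffOn ℝ 1 (pdy u) U := by
  have h := hu.fderiv_of_isOpen (m := 1) hU (by norm_num)
  exact (ContinuousLinearMap.apply ℝ ℝ ((0,1) : Pt)).contDiff.comp_contDiffOn h

lemma pd_continuousOn {u : Pt → ℝ} {U : Set Pt} (hU : IsOpen U) (hu : ContDiffOn ℝ 1 u U) :
    ContinuousOn (pdx u) U ∧ ContinuousOn (pdy u) U := by
  have h := hu.continuousOn_fderiv_of_isOpen hU (le_refl 1)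
  constructor
  · exact (ContinuousLinearMap.apply ℝ ℝ ((1,0) : Pt)).continuous.comp_continuousOn h
  · exact (ContinuousLinearMap.apply ℝ ℝ ((0,1) : Pt)).continuous.comp_continuousOn h

lemma fderiv_comp_Lc {u : Pt → ℝ} (α β : ℝ) {p : Pt} (hd : DifferentiableAt ℝ u (Lc α β p)) :
    fderiv ℝ (u ∘ (Lc α β)) p = (fderiv ℝ u (Lc α β p)).comp (Lc α β) := by
  rw [fderiv_comp (x := p) hd (Lc α β).differentiableAt, (Lc α β).fderiv]

lemma pdx_comp_Lc {u : Pt → ℝ} (α β : ℝ) {p : Pt} (hd : DifferentiableAt ℝ u (Lc α β p)) :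
    pdx (u ∘ (Lc α β)) p = pdx u (Lc α β p) := by
  have h10 : Lc α β ((1,0) : Pt) = ((1,0) : Pt) := by rw [Lc_apply]; norm_num
  rw [pdx, fderiv_comp_Lc α β hd, ContinuousLinearMap.comp_apply, h10, pdx]

lemma pdy_comp_Lc {u : Pt → ℝ} (α β : ℝ) {p : Pt} (hd : DifferentiableAt ℝ u (Lc α β p)) :
    pdy (u ∘ (Lc α β)) p = α * pdx u (Lc α β p) + β * pdy u (Lc α β p) := by
  have h01 : Lc α β ((0,1) : Pt) = ((α, β) : Pt) := by rw [Lc_apply]; norm_num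
  rw [pdy, fderiv_comp_Lc α β hd, ContinuousLinearMap.comp_apply, h01,
    clm_decomp (fderiv ℝ u (Lc α β p)) ((α, β) : Pt)]
  rfl

lemma sec_partials {u : Pt → ℝ} {U' : Set Pt} (α β : ℝ) (hU' : IsOpen U')
    (hu : ContDiffOn ℝ 2 u U') {p : Pt} (hp : Lc α β p ∈ U') :
    pdx (pdx (u ∘ Lc α β)) p = pdx (pdx u) (Lc α β p) ∧
    pdy (pdx (u ∘ Lc α β)) p = α * pdx (pdx u) (Lc α β p) + β * pdy (pdx u) (Lc α β p) ∧
    pdx (pdy (u ∘ Lc α β)) p = α * pdx (pdx u) (Lc α β p) + β * pdx (pdy u) (Lc α β p) ∧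
    pdy (pdy (u ∘ Lc α β)) p =
      α * (α * pdx (pdx u) (Lc α β p) + β * pdy (pdx u) (Lc α β p))
      + β * (α * pdx (pdy u) (Lc α β p) + β * pdy (pdy u) (Lc α β p)) := by
  set L := Lc α β with hL
  have hUopen : IsOpen ((L : Pt → Pt) ⁻¹' U') := hU'.preimage L.continuous
  have hmemU : p ∈ (L : Pt → Pt) ⁻¹' U' := hp
  have hnhds : (L : Pt → Pt) ⁻¹' U' ∈ nhds p := hUopen.mem_nhds hmemU
  have hdiff : ∀ q ∈ U', DifferentiableAt ℝ u q := fun q hq =>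
    (hu.contDiffAt (hU'.mem_nhds hq)).differentiableAt (by norm_num)
  have hx : ContDiffOn ℝ 1 (pdx u) U' := pdx_contDiffOn hU' hu
  have hy : ContDiffOn ℝ 1 (pdy u) U' := pdy_contDiffOn hU' hu
  have hxd : DifferentiableAt ℝ (pdx u) (L p) :=
    (hx.contDiffAt (hU'.mem_nhds hp)).differentiableAt one_ne_zero
  have hyd : DifferentiableAt ℝ (pdy u) (L p) :=
    (hy.contDiffAt (hU'.mem_nhds hp)).differentiableAt one_ne_zero
  -- first derivatives eventually
  have ev1 : pdx (u ∘ L) =ᶠ[nhds p] (pdx u) ∘ L := by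
    filter_upwards [hnhds] with q hq
    exact pdx_comp_Lc α β (hdiff _ hq)
  have ev2 : pdy (u ∘ L) =ᶠ[nhds p] (fun q => α * pdx u q + β * pdy u q) ∘ L := by
    filter_upwards [hnhds] with q hq
    exact pdy_comp_Lc α β (hdiff _ hq)
  have h10 : L ((1,0) : Pt) = ((1,0) : Pt) := by rw [hL, Lc_apply]; norm_num
  have h01 : L ((0,1) : Pt) = ((α, β) : Pt) := by rw [hL, Lc_apply]; norm_num
  -- fderiv of (pdx u) ∘ L at p
  have f1 : fderiv ℝ (pdx (u ∘ L)) p = (fderiv ℝ (pdx u) (L p)).comp L := by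
    rw [ev1.fderiv_eq, fderiv_comp_Lc α β hxd]
  -- fderiv of the second combination
  have hgd : DifferentiableAt ℝ (fun q => α * pdx u q + β * pdy u q) (L p) :=
    ((hxd.const_mul α).add (hyd.const_mul β))
  have f2 : fderiv ℝ (pdy (u ∘ L)) p = (fderiv ℝ (fun q => α * pdx u q + β * pdy u q) (L p)).comp L := by
    rw [ev2.fderiv_eq, fderiv_comp_Lc α β hgd]
  have fg : ∀ w : Pt, fderiv ℝ (fun q => α * pdx u q + β * pdy u q) (L p) w
      = α * fderiv ℝ (pdx u) (L p) w + β * fderiv ℝ (pdy u) (L p) w := by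
    intro w
    rw [fderiv_fun_add (hxd.const_mul α) (hyd.const_mul β), fderiv_const_mul hxd, fderiv_const_mul hyd]
    simp
  have key : ∀ f : Pt →L[ℝ] ℝ, (f.comp L) ((0,1) : Pt) = f ((α, β) : Pt) := by
    intro f; rw [ContinuousLinearMap.comp_apply, h01]
  have key1 : ∀ f : Pt →L[ℝ] ℝ, (f.comp L) ((1,0) : Pt) = f ((1,0) : Pt) := by
    intro f; rw [ContinuousLinearMap.comp_apply, h10]
  refine ⟨?_, ?_, ?_, ?_⟩
  · rw [pdx, f1, key1]; rfl
  · rw [pdy, f1, key, clm_decomp]; rfl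
  · rw [pdx, f2, key1, fg]; rfl
  · rw [pdy, f2, key, fg, clm_decomp (fderiv ℝ (pdx u) (L p)), clm_decomp (fderiv ℝ (pdy u) (L p))]
    rfl

lemma elen_pos {v : Pt} (h : v ≠ 0) : 0 < elen v := by
  have h2 : 0 < v.1 ^ 2 + v.2 ^ 2 := by
    by_contra hc
    push_neg at hc
    have h1 : v.1 = 0 := by nlinarith [sq_nonneg v.1, sq_nonneg v.2]
    have h2 : v.2 = 0 := by nlinarith [sq_nonneg v.1, sq_nonneg v.2]
    exact h (Prod.ext h1 h2)
  exact Real.sqrt_pos.mpr h2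

lemma elen_sq {v : Pt} : (elen v) ^ 2 = v.1 ^ 2 + v.2 ^ 2 :=
  Real.sq_sqrt (by positivity)

/-- Any vector decomposes along the edge direction and the outward normal. -/

lemma decomp_normal (P Q R : Pt) (h : Q ≠ P) (w : Pt) :
    ∃ c₁ c₂ : ℝ, w = c₁ • (Q - P) + c₂ • outNormal P Q R := by
  set d : Pt := Q - P with hd
  have hdne : d ≠ 0 := sub_ne_zero.mpr h
  have hS : 0 < d.1 ^ 2 + d.2 ^ 2 := by
    have := elen_pos hdne; nlinarith [elen_sq (v := d), this]
  have hel : elen d ≠ 0 := (elen_pos hdne).ne'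
  set k : ℝ := if (Q - P).2 * (R - P).1 - (Q - P).1 * (R - P).2 ≤ 0 then (elen (Q - P))⁻¹
    else -(elen (Q - P))⁻¹ with hk
  have hkne : k ≠ 0 := by
    rw [hk]; split <;> simp [hel] <;> exact hel
  have hout : outNormal P Q R = k • ((d.2, -d.1) : Pt) := rfl
  refine ⟨(w.1 * d.1 + w.2 * d.2) / (d.1 ^ 2 + d.2 ^ 2),
    ((w.1 * d.2 - w.2 * d.1) / (d.1 ^ 2 + d.2 ^ 2)) / k, ?_⟩
  rw [hout, smul_smul]
  apply Prod.ext
  · simp only [Prod.fst_add, Prod.smul_fst, smul_eq_mul]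
    field_simp
    ring
  · simp only [Prod.snd_add, Prod.smul_snd, smul_eq_mul]
    field_simp
    ring

lemma seg_param_mem {P Q : Pt} {t : ℝ} (ht : t ∈ Set.uIcc (0:ℝ) 1) :
    P + t • (Q - P) ∈ segment ℝ P Q := by
  rw [segment_eq_image']
  exact ⟨t, by rwa [Set.uIcc_of_le (by norm_num : (0:ℝ) ≤ 1)] at ht, rfl⟩

lemma ftc_seg {g : Pt → ℝ} {U : Set Pt} (hU : IsOpen U) (hg : ContDiffOn ℝ 1 g U)
    (P Q : Pt) (hseg : segment ℝ P Q ⊆ U) :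
    ∫ t in (0:ℝ)..1, fderiv ℝ g (P + t • (Q - P)) (Q - P) = g Q - g P := by
  set φ : ℝ → Pt := fun t => P + t • (Q - P) with hφ
  have hφmem : ∀ t ∈ Set.uIcc (0:ℝ) 1, φ t ∈ U := fun t ht => hseg (seg_param_mem ht)
  have hφc : Continuous φ := by fun_prop
  have hderiv : ∀ t ∈ Set.uIcc (0:ℝ) 1,
      HasDerivAt (g ∘ φ) (fderiv ℝ g (φ t) (Q - P)) t := by
    intro t ht
    have hφd : HasDerivAt φ (Q - P) t := by
      have h1 : HasDerivAt (fun s : ℝ => s • (Q - P)) ((1:ℝ) • (Q - P)) t :=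
        (hasDerivAt_id t).smul_const (Q - P)
      simpa [hφ] using h1.const_add P
    have hgd : HasFDerivAt g (fderiv ℝ g (φ t)) (φ t) :=
      ((hg.contDiffAt (hU.mem_nhds (hφmem t ht))).differentiableAt one_ne_zero).hasFDerivAt
    exact hgd.comp_hasDerivAt t hφd
  have hcont : ContinuousOn (fun t : ℝ => fderiv ℝ g (φ t) (Q - P)) (Set.uIcc (0:ℝ) 1) := by
    have h1 : ContinuousOn (fderiv ℝ g) U := hg.continuousOn_fderiv_of_isOpen hU (le_refl 1)
    have h2 : ContinuousOn (fun t : ℝ => fderiv ℝ g (φ t)) (Set.uIcc (0:ℝ) 1) :=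
      h1.comp hφc.continuousOn hφmem
    exact (ContinuousLinearMap.apply ℝ ℝ (Q - P)).continuous.comp_continuousOn h2
  have hint : IntervalIntegrable _ volume 0 1 := hcont.intervalIntegrable
  have := intervalIntegral.integral_eq_sub_of_hasDerivAt hderiv hint
  rw [this]
  have h0 : φ 0 = P := by simp [hφ]
  have h1 : φ 1 = Q := by simp [hφ]
  rw [Function.comp_apply, Function.comp_apply, h0, h1]

lemma edge_transfer (α β : ℝ) {u : Pt → ℝ} {U' : Set Pt} (hU' : IsOpen U')
    (hu : ContDiffOn ℝ 2 u U') (P Q R : Pt)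
    (hPQ' : Lc α β Q ≠ Lc α β P)
    (hseg : segment ℝ (Lc α β P) (Lc α β Q) ⊆ U')
    (huP : u (Lc α β P) = 0) (huQ : u (Lc α β Q) = 0)
    (hedge : edgeInt (normalDeriv u (Lc α β P) (Lc α β Q) (Lc α β R))
      (Lc α β P) (Lc α β Q) = 0) :
    edgeInt (normalDeriv (u ∘ Lc α β) P Q R) P Q = 0 := by
  set L := Lc α β with hLdef
  set P' := L P
  set Q' := L Q
  set n : Pt := outNormal P Q R with hn
  set n' : Pt := outNormal P' Q' (L R) with hn'
  obtain ⟨c₁, c₂, hw⟩ := decomp_normal P' Q' (L R) hPQ' (L n)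
  have hd' : ∀ t : ℝ, L (P + t • (Q - P)) = P' + t • (Q' - P') := by
    intro t; simp only [map_add, _root_.map_smul, map_sub]; rfl
  have hdiff : ∀ q ∈ U', DifferentiableAt ℝ u q := fun q hq =>
    (hu.contDiffAt (hU'.mem_nhds hq)).differentiableAt (by norm_num)
  have hmem : ∀ t ∈ Set.uIcc (0:ℝ) 1, P' + t • (Q' - P') ∈ U' :=
    fun t ht => hseg (seg_param_mem ht)
  -- the integrand equals a combination
  have hcong : ∀ t ∈ Set.uIcc (0:ℝ) 1,
      normalDeriv (u ∘ L) P Q R (P + t • (Q - P))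
      = c₁ * fderiv ℝ u (P' + t • (Q' - P')) (Q' - P')
        + c₂ * normalDeriv u P' Q' (L R) (P' + t • (Q' - P')) := by
    intro t ht
    have hm := hmem t ht
    rw [normalDeriv, fderiv_comp_Lc α β (by rw [hd']; exact hdiff _ hm),
      ContinuousLinearMap.comp_apply, ← hLdef, hd', ← hn, hw, map_add]
    rw [(fderiv ℝ u (P' + t • (Q' - P'))).map_smul, (fderiv ℝ u (P' + t • (Q' - P'))).map_smul]
    rw [smul_eq_mul, smul_eq_mul, normalDeriv, ← hn']
  -- continuity of the pieces
  have hφc : Continuous (fun t : ℝ => P' + t • (Q' - P')) := by fun_prop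
  have hfc : ContinuousOn (fderiv ℝ u) U' :=
    (hu.of_le (by norm_num)).continuousOn_fderiv_of_isOpen hU' (le_refl 1)
  have hcomp : ContinuousOn (fun t : ℝ => fderiv ℝ u (P' + t • (Q' - P'))) (Set.uIcc (0:ℝ) 1) :=
    hfc.comp hφc.continuousOn hmem
  have hint1 : IntervalIntegrable
      (fun t : ℝ => fderiv ℝ u (P' + t • (Q' - P')) (Q' - P')) volume 0 1 :=
    ((ContinuousLinearMap.apply ℝ ℝ (Q' - P')).continuous.comp_continuousOn
      hcomp).intervalIntegrable
  have hint2 : IntervalIntegrable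
      (fun t : ℝ => normalDeriv u P' Q' (L R) (P' + t • (Q' - P'))) volume 0 1 :=
    ((ContinuousLinearMap.apply ℝ ℝ n').continuous.comp_continuousOn hcomp).intervalIntegrable
  -- compute the integral
  rw [edgeInt]
  have hI : (∫ t in (0:ℝ)..1, normalDeriv (u ∘ L) P Q R (P + t • (Q - P)))
      = c₁ * (∫ t in (0:ℝ)..1, fderiv ℝ u (P' + t • (Q' - P')) (Q' - P'))
        + c₂ * (∫ t in (0:ℝ)..1, normalDeriv u P' Q' (L R) (P' + t • (Q' - P'))) := by
    rw [intervalIntegral.integral_congr hcong]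
    rw [intervalIntegral.integral_add (hint1.const_mul c₁) (hint2.const_mul c₂),
      intervalIntegral.integral_const_mul, intervalIntegral.integral_const_mul]
  have hftc : (∫ t in (0:ℝ)..1, fderiv ℝ u (P' + t • (Q' - P')) (Q' - P')) = 0 := by
    rw [ftc_seg hU' (hu.of_le (by norm_num)) P' Q' hseg, huP, huQ, sub_zero]
  have helen' : elen (Q' - P') ≠ 0 := (elen_pos (sub_ne_zero.mpr hPQ')).ne'
  have hedge2 : (∫ t in (0:ℝ)..1, normalDeriv u P' Q' (L R) (P' + t • (Q' - P'))) = 0 := by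
    rw [edgeInt] at hedge
    exact (mul_eq_zero.mp hedge).resolve_left helen'
  rw [hI, hftc, hedge2]
  ring

lemma Tri_image (α β : ℝ) (O A B : Pt) :
    (Lc α β) '' Tri O A B = Tri (Lc α β O) (Lc α β A) (Lc α β B) := by
  have h := ((Lc α β : Pt →ₗ[ℝ] Pt)).image_convexHull ({O, A, B} : Set Pt)
  simp only [Tri]
  have hco : (⇑(Lc α β) : Pt → Pt) = ⇑((Lc α β : Pt →ₗ[ℝ] Pt)) := rfl
  rw [hco, h, Set.image_insert_eq, Set.image_insert_eq, Set.image_singleton]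

lemma vertex_mem_Tri {O A B : Pt} :
    O ∈ Tri O A B ∧ A ∈ Tri O A B ∧ B ∈ Tri O A B :=
  ⟨subset_convexHull ℝ _ (by simp), subset_convexHull ℝ _ (by simp),
    subset_convexHull ℝ _ (by simp)⟩

lemma segment_subset_Tri {O A B P Q : Pt} (hP : P ∈ Tri O A B) (hQ : Q ∈ Tri O A B) :
    segment ℝ P Q ⊆ Tri O A B :=
  (convex_convexHull ℝ _).segment_subset hP hQ

lemma memVFM_comp (α β : ℝ) {u : Pt → ℝ} (O A B : Pt)
    (hOA : Lc α β A ≠ Lc α β O) (hAB : Lc α β B ≠ Lc α β A) (hBO : Lc α β O ≠ Lc α β B)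
    (hu : MemVFM u (Lc α β O) (Lc α β A) (Lc α β B)) :
    MemVFM (u ∘ Lc α β) O A B := by
  obtain ⟨⟨U', hU'open, hU'sub, hU'cd⟩, huO, huA, huB, he1, he2, he3⟩ := hu
  set L := Lc α β with hL
  have hTri : L '' Tri O A B = Tri (L O) (L A) (L B) := Tri_image α β O A B
  have hsubT : ∀ P Q : Pt, P ∈ ({O, A, B} : Set Pt) → Q ∈ ({O, A, B} : Set Pt) →
      segment ℝ (L P) (L Q) ⊆ U' := by
    intro P Q hP hQ
    refine (segment_subset_Tri ?_ ?_).trans hU'sub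
    · rw [← hTri]; exact ⟨P, subset_convexHull ℝ _ hP, rfl⟩
    · rw [← hTri]; exact ⟨Q, subset_convexHull ℝ _ hQ, rfl⟩
  refine ⟨⟨(L : Pt → Pt) ⁻¹' U', hU'open.preimage L.continuous, ?_, ?_⟩, ?_, ?_, ?_, ?_, ?_, ?_⟩
  · intro p hp
    exact Set.mem_preimage.mpr (hU'sub (hTri ▸ ⟨p, hp, rfl⟩))
  · exact hU'cd.comp (L.contDiff.contDiffOn) (fun p hp => hp)
  · exact huO
  · exact huA
  · exact huB
  · exact edge_transfer α β hU'open hU'cd O A B hOA (hsubT O A (by simp) (by simp)) huO huA he1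
  · exact edge_transfer α β hU'open hU'cd A B O hAB (hsubT A B (by simp) (by simp)) huA huB he2
  · exact edge_transfer α β hU'open hU'cd B O A hBO (hsubT B O (by simp) (by simp)) huB huO he3

lemma frob_bound (α β m X Y Z W : ℝ)
    (hq : ∀ x y : ℝ, x^2 + (α*x + β*y)^2 ≤ m^2 * (x^2 + y^2)) :
    X^2 + (α*X+β*Y)^2 + (α*X+β*Z)^2 + (α*(α*X+β*Y)+β*(α*Z+β*W))^2
      ≤ m^4 * (X^2 + Y^2 + Z^2 + W^2) := by
  have h1 := hq X Z
  have h2 := hq (α*X+β*Y) (α*Z+β*W)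
  have h3 := hq X Y
  have h4 := hq Z W
  have h5 : (α*X+β*Y)^2 + (α*Z+β*W)^2
      ≤ m^2*(X^2+Y^2) - X^2 + (m^2*(Z^2+W^2) - Z^2) := by linarith
  have h6 := mul_le_mul_of_nonneg_left h5 (sq_nonneg m)
  nlinarith [h6]

/-- The Frobenius-square of the second derivative integrand. -/
def S2 (u : Pt → ℝ) (p : Pt) : ℝ :=
  (pdx (pdx u) p) ^ 2 + (pdy (pdx u) p) ^ 2 + (pdx (pdy u) p) ^ 2 + (pdy (pdy u) p) ^ 2

lemma h2sq_eq (u : Pt → ℝ) (K : Set Pt) : h2sq u K = ∫ p in K, S2 u p := rfl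

lemma S2_continuousOn {u : Pt → ℝ} {U : Set Pt} (hU : IsOpen U) (hu : ContDiffOn ℝ 2 u U) :
    ContinuousOn (S2 u) U := by
  have hx := pdx_contDiffOn hU hu
  have hy := pdy_contDiffOn hU hu
  obtain ⟨hxx, hxy⟩ := pd_continuousOn hU hx
  obtain ⟨hyx, hyy⟩ := pd_continuousOn hU hy
  exact (((hxx.pow 2).add (hxy.pow 2)).add (hyx.pow 2)).add (hyy.pow 2)

lemma core_transfer (α β m : ℝ) (hβ : 0 < β) (hm : 0 ≤ m)
    (hq : ∀ x y : ℝ, x^2 + (α*x + β*y)^2 ≤ m^2 * (x^2 + y^2))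
    (O A B : Pt)
    (hOA : Lc α β A ≠ Lc α β O) (hAB : Lc α β B ≠ Lc α β A) (hBO : Lc α β O ≠ Lc α β B)
    (C : ℝ) (hC : 0 ≤ C)
    (hK : ∀ v : Pt → ℝ, MemVFM v O A B → l2norm v (Tri O A B) ≤ C * h2norm v (Tri O A B))
    (u : Pt → ℝ) (hu : MemVFM u (Lc α β O) (Lc α β A) (Lc α β B)) :
    l2norm u (Tri (Lc α β O) (Lc α β A) (Lc α β B)) ≤
      m ^ 2 * C * h2norm u (Tri (Lc α β O) (Lc α β A) (Lc α β B)) := by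
  have hTri : (Lc α β) '' Tri O A B = Tri (Lc α β O) (Lc α β A) (Lc α β B) :=
    Tri_image α β O A B
  have hKcomp : IsCompact (Tri O A B) := (Set.toFinite _).isCompact_convexHull ℝ
  have hKmeas : MeasurableSet (Tri O A B) := hKcomp.isClosed.measurableSet
  have hvVFM : MemVFM (u ∘ Lc α β) O A B := memVFM_comp α β O A B hOA hAB hBO hu
  have hKv := hK (u ∘ Lc α β) hvVFM
  obtain ⟨⟨U', hU'open, hU'sub, hU'cd⟩, -⟩ := hu
  have hmapsK : ∀ p ∈ Tri O A B, Lc α β p ∈ U' := by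
    intro p hp
    apply hU'sub
    rw [← hTri]
    exact ⟨p, hp, rfl⟩
  -- l2 norms
  have hl2 : l2sq u (Tri (Lc α β O) (Lc α β A) (Lc α β B)) = β * l2sq (u ∘ Lc α β) (Tri O A B) := by
    rw [l2sq, l2sq, ← hTri, cov α β hβ _ hKmeas (fun p => u p ^ 2)]
    simp only [Function.comp_apply]
  have hl2norm : l2norm u (Tri (Lc α β O) (Lc α β A) (Lc α β B))
      = Real.sqrt β * l2norm (u ∘ Lc α β) (Tri O A B) := by
    rw [l2norm, l2norm, hl2, Real.sqrt_mul hβ.le]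
  -- pointwise second-derivative bound
  have hptwise : ∀ p ∈ Tri O A B, S2 (u ∘ Lc α β) p ≤ m ^ 4 * S2 u (Lc α β p) := by
    intro p hp
    obtain ⟨e1, e2, e3, e4⟩ := sec_partials α β hU'open hU'cd (hmapsK p hp)
    rw [S2, S2, e1, e2, e3, e4]
    have := frob_bound α β m (pdx (pdx u) (Lc α β p)) (pdy (pdx u) (Lc α β p))
      (pdx (pdy u) (Lc α β p)) (pdy (pdy u) (Lc α β p)) hq
    nlinarith [this]
  -- integrability
  have hS2u : ContinuousOn (S2 u) U' := S2_continuousOn hU'open hU'cd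
  have hS2uL : ContinuousOn (fun p => S2 u (Lc α β p)) (Tri O A B) :=
    hS2u.comp (Lc α β).continuous.continuousOn hmapsK
  have hS2v : ContinuousOn (S2 (u ∘ Lc α β)) (Tri O A B) := by
    have hx := pdx_contDiffOn hU'open hU'cd
    have hy := pdy_contDiffOn hU'open hU'cd
    obtain ⟨hxx, hxy⟩ := pd_continuousOn hU'open hx
    obtain ⟨hyx, hyy⟩ := pd_continuousOn hU'open hy
    have c1 : ContinuousOn (fun p => pdx (pdx u) (Lc α β p)) (Tri O A B) :=
      hxx.comp (Lc α β).continuous.continuousOn hmapsK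
    have c2 : ContinuousOn (fun p => pdy (pdx u) (Lc α β p)) (Tri O A B) :=
      hxy.comp (Lc α β).continuous.continuousOn hmapsK
    have c3 : ContinuousOn (fun p => pdx (pdy u) (Lc α β p)) (Tri O A B) :=
      hyx.comp (Lc α β).continuous.continuousOn hmapsK
    have c4 : ContinuousOn (fun p => pdy (pdy u) (Lc α β p)) (Tri O A B) :=
      hyy.comp (Lc α β).continuous.continuousOn hmapsK
    apply ContinuousOn.congr
      (f := fun p => (pdx (pdx u) (Lc α β p))^2
        + (α * pdx (pdx u) (Lc α β p) + β * pdy (pdx u) (Lc α β p))^2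
        + (α * pdx (pdx u) (Lc α β p) + β * pdx (pdy u) (Lc α β p))^2
        + (α * (α * pdx (pdx u) (Lc α β p) + β * pdy (pdx u) (Lc α β p))
            + β * (α * pdx (pdy u) (Lc α β p) + β * pdy (pdy u) (Lc α β p)))^2)
    · have e2c : ContinuousOn (fun p => α * pdx (pdx u) (Lc α β p) + β * pdy (pdx u) (Lc α β p)) (Tri O A B) :=
        (continuousOn_const.mul c1).add (continuousOn_const.mul c2)
      have e3c : ContinuousOn (fun p => α * pdx (pdx u) (Lc α β p) + β * pdx (pdy u) (Lc α β p)) (Tri O A B) :=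
        (continuousOn_const.mul c1).add (continuousOn_const.mul c3)
      have e4c : ContinuousOn (fun p => α * pdx (pdy u) (Lc α β p) + β * pdy (pdy u) (Lc α β p)) (Tri O A B) :=
        (continuousOn_const.mul c3).add (continuousOn_const.mul c4)
      exact (((c1.pow 2).add (e2c.pow 2)).add (e3c.pow 2)).add
        (((continuousOn_const.mul e2c).add (continuousOn_const.mul e4c)).pow 2)
    · intro p hp
      obtain ⟨e1, e2, e3, e4⟩ := sec_partials α β hU'open hU'cd (hmapsK p hp)
      rw [S2, e1, e2, e3, e4]
  have hintv : IntegrableOn (S2 (u ∘ Lc α β)) (Tri O A B) volume :=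
    hS2v.integrableOn_compact hKcomp
  have hintuL : IntegrableOn (fun p => m ^ 4 * S2 u (Lc α β p)) (Tri O A B) volume :=
    (hS2uL.integrableOn_compact hKcomp).const_mul _
  -- compare h2 integrals
  have hh2le : β * h2sq (u ∘ Lc α β) (Tri O A B)
      ≤ m ^ 4 * h2sq u (Tri (Lc α β O) (Lc α β A) (Lc α β B)) := by
    have h1 : h2sq (u ∘ Lc α β) (Tri O A B) ≤ ∫ p in Tri O A B, m ^ 4 * S2 u (Lc α β p) := by
      rw [h2sq_eq]
      exact setIntegral_mono_on hintv hintuL hKmeas hptwise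
    have h2 : (∫ p in Tri O A B, m ^ 4 * S2 u (Lc α β p))
        = m ^ 4 * ∫ p in Tri O A B, S2 u (Lc α β p) := MeasureTheory.integral_const_mul _ _
    have h3 : h2sq u (Tri (Lc α β O) (Lc α β A) (Lc α β B))
        = β * ∫ p in Tri O A B, S2 u (Lc α β p) := by
      rw [h2sq_eq, ← hTri, cov α β hβ _ hKmeas (S2 u)]
    have hm4 : (0:ℝ) ≤ m ^ 4 := by positivity
    nlinarith [h1, h2, h3, hβ, mul_le_mul_of_nonneg_left h1 hβ.le]
  -- nonnegativity
  have hh2v_nonneg : 0 ≤ h2sq (u ∘ Lc α β) (Tri O A B) := by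
    rw [h2sq_eq]
    apply setIntegral_nonneg hKmeas
    intro p _
    rw [S2]; positivity
  -- assemble
  rw [hl2norm]
  have step1 : Real.sqrt β * l2norm (u ∘ Lc α β) (Tri O A B)
      ≤ Real.sqrt β * (C * h2norm (u ∘ Lc α β) (Tri O A B)) :=
    mul_le_mul_of_nonneg_left hKv (Real.sqrt_nonneg β)
  have step2 : Real.sqrt β * (C * h2norm (u ∘ Lc α β) (Tri O A B))
      = C * Real.sqrt (β * h2sq (u ∘ Lc α β) (Tri O A B)) := by
    rw [h2norm, Real.sqrt_mul hβ.le]; ring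
  have step3 : Real.sqrt (β * h2sq (u ∘ Lc α β) (Tri O A B))
      ≤ Real.sqrt (m ^ 4 * h2sq u (Tri (Lc α β O) (Lc α β A) (Lc α β B))) :=
    Real.sqrt_le_sqrt hh2le
  have step4 : Real.sqrt (m ^ 4 * h2sq u (Tri (Lc α β O) (Lc α β A) (Lc α β B)))
      = m ^ 2 * h2norm u (Tri (Lc α β O) (Lc α β A) (Lc α β B)) := by
    rw [h2norm, Real.sqrt_mul (by positivity), show m ^ 4 = (m ^ 2) ^ 2 by ring,
      Real.sqrt_sq (by positivity)]
  calc Real.sqrt β * l2norm (u ∘ Lc α β) (Tri O A B)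
      ≤ Real.sqrt β * (C * h2norm (u ∘ Lc α β) (Tri O A B)) := step1
    _ = C * Real.sqrt (β * h2sq (u ∘ Lc α β) (Tri O A B)) := step2
    _ ≤ C * Real.sqrt (m ^ 4 * h2sq u (Tri (Lc α β O) (Lc α β A) (Lc α β B))) :=
        mul_le_mul_of_nonneg_left step3 hC
    _ = m ^ 2 * C * h2norm u (Tri (Lc α β O) (Lc α β A) (Lc α β B)) := by rw [step4]; ring

lemma quad_bound (α β m : ℝ) (hA : 0 < m^2 - 1 - α^2)
    (hdet : (m^2 - 1 - α^2) * (m^2 - β^2) = (α*β)^2) :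
    ∀ x y : ℝ, x^2 + (α*x + β*y)^2 ≤ m^2 * (x^2 + y^2) := by
  intro x y
  nlinarith [sq_nonneg ((m^2 - 1 - α^2)*x - α*β*y), hA, hdet, sq_nonneg y, sq_nonneg x]

lemma trig_core (θ θ' : ℝ) (h1 : 0 < θ) (h2 : θ < π) (h1' : 0 < θ') (h2' : θ' < π) :
    (Real.sin θ' / Real.sin θ)^2
      = (Real.cos (θ'/2)/Real.cos (θ/2))^2 * (Real.sin (θ'/2)/Real.sin (θ/2))^2 ∧
    (Real.cos (θ'/2)/Real.cos (θ/2))^2 + (Real.sin (θ'/2)/Real.sin (θ/2))^2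
      = 1 + ((Real.cos θ' - Real.cos θ)/Real.sin θ)^2 + (Real.sin θ' / Real.sin θ)^2 := by
  have hs : 0 < Real.sin θ := Real.sin_pos_of_pos_of_lt_pi h1 h2
  have hs' : 0 < Real.sin θ' := Real.sin_pos_of_pos_of_lt_pi h1' h2'
  have p1 : Real.sin θ ^ 2 = 1 - Real.cos θ ^ 2 := by
    have := Real.sin_sq_add_cos_sq θ; linarith
  have p2 : Real.sin θ' ^ 2 = 1 - Real.cos θ' ^ 2 := by
    have := Real.sin_sq_add_cos_sq θ'; linarith
  have hc1 : -1 < Real.cos θ := by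
    have := Real.neg_one_le_cos θ
    rcases lt_or_eq_of_le this with h | h
    · exact h
    · exfalso; have : Real.sin θ ^ 2 = 0 := by rw [p1, ← h]; ring
      nlinarith [hs]
  have hc2 : Real.cos θ < 1 := by
    by_contra hcon
    push_neg at hcon
    have h3 := Real.cos_le_one θ
    have : Real.sin θ ^ 2 = 0 := by rw [p1]; nlinarith
    nlinarith [hs]
  have hc1' : -1 < Real.cos θ' := by
    have := Real.neg_one_le_cos θ'
    rcases lt_or_eq_of_le this with h | h
    · exact h
    · exfalso; have : Real.sin θ' ^ 2 = 0 := by rw [p2, ← h]; ring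
      nlinarith [hs']
  have hc2' : Real.cos θ' < 1 := by
    by_contra hcon
    push_neg at hcon
    have h3 := Real.cos_le_one θ'
    have : Real.sin θ' ^ 2 = 0 := by rw [p2]; nlinarith
    nlinarith [hs']
  have q1 : Real.cos (θ/2)^2 = (1 + Real.cos θ)/2 := by
    have := Real.cos_sq (θ/2); rw [show 2*(θ/2) = θ by ring] at this; linarith
  have q2 : Real.sin (θ/2)^2 = (1 - Real.cos θ)/2 := by
    have := Real.sin_sq_add_cos_sq (θ/2); linarith
  have q1' : Real.cos (θ'/2)^2 = (1 + Real.cos θ')/2 := by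
    have := Real.cos_sq (θ'/2); rw [show 2*(θ'/2) = θ' by ring] at this; linarith
  have q2' : Real.sin (θ'/2)^2 = (1 - Real.cos θ')/2 := by
    have := Real.sin_sq_add_cos_sq (θ'/2); linarith
  constructor
  · rw [div_pow, div_pow, div_pow, q1, q2, q1', q2']
    rw [p1, p2]
    have d1 : (1:ℝ) + Real.cos θ ≠ 0 := by linarith
    have d2 : (1:ℝ) - Real.cos θ ≠ 0 := by linarith
    have d3 : (1:ℝ) - Real.cos θ ^ 2 ≠ 0 := by nlinarith
    field_simp
    ring
  · rw [div_pow, div_pow, div_pow, div_pow, q1, q2, q1', q2']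
    rw [p1, p2]
    have d1 : (1:ℝ) + Real.cos θ ≠ 0 := by linarith
    have d2 : (1:ℝ) - Real.cos θ ≠ 0 := by linarith
    have d3 : (1:ℝ) - Real.cos θ ^ 2 ≠ 0 := by nlinarith
    field_simp
    ring

lemma case_step (θ θ' : ℝ) (hθ0 : 0 < θ) (hθ : θ ≤ π/3) (hθ0' : 0 < θ') (hθ' : θ' ≤ π/3)
    (m b : ℝ) (hm0 : 0 ≤ m)
    (hprod : (Real.sin θ' / Real.sin θ)^2 = m^2 * b^2)
    (htr : m^2 + b^2
      = 1 + ((Real.cos θ' - Real.cos θ)/Real.sin θ)^2 + (Real.sin θ'/Real.sin θ)^2)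
    (hm2 : 1 < m^2) (hb2 : 0 < b^2) (hb1 : b^2 ≤ 1)
    (C : ℝ) (hC : 0 ≤ C)
    (hK : ∀ v : Pt → ℝ, MemVFM v ((0,0) : Pt) ((1,0) : Pt) ((Real.cos θ, Real.sin θ) : Pt) →
      l2norm v (Tri ((0,0) : Pt) ((1,0) : Pt) ((Real.cos θ, Real.sin θ) : Pt)) ≤
        C * h2norm v (Tri ((0,0) : Pt) ((1,0) : Pt) ((Real.cos θ, Real.sin θ) : Pt)))
    (u : Pt → ℝ)
    (hu : MemVFM u ((0,0) : Pt) ((1,0) : Pt) ((Real.cos θ', Real.sin θ') : Pt)) :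
    l2norm u (Tri ((0,0) : Pt) ((1,0) : Pt) ((Real.cos θ', Real.sin θ') : Pt)) ≤
      m^2 * C * h2norm u (Tri ((0,0) : Pt) ((1,0) : Pt) ((Real.cos θ', Real.sin θ') : Pt)) := by
  have hπ : θ < π := lt_of_le_of_lt hθ (by linarith [Real.pi_pos])
  have hπ' : θ' < π := lt_of_le_of_lt hθ' (by linarith [Real.pi_pos])
  have hs : 0 < Real.sin θ := Real.sin_pos_of_pos_of_lt_pi hθ0 hπ
  have hs' : 0 < Real.sin θ' := Real.sin_pos_of_pos_of_lt_pi hθ0' hπ'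
  set α : ℝ := (Real.cos θ' - Real.cos θ)/Real.sin θ with hα
  set β : ℝ := Real.sin θ'/Real.sin θ with hβdef
  have hβ : 0 < β := div_pos hs' hs
  -- algebraic facts
  have hα2 : α^2 = (m^2-1)*(1-b^2) := by linear_combination (-1 : ℝ)*htr - hprod
  have hAval : m^2-1-α^2 = (m^2-1)*b^2 := by linear_combination (-1 : ℝ)*hα2
  have hA : 0 < m^2-1-α^2 := by
    rw [hAval]; exact mul_pos (by linarith) hb2
  have hdet : (m^2-1-α^2)*(m^2-β^2) = (α*β)^2 := by
    rw [hAval, mul_pow, hα2]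
    have hβ2 : β^2 = m^2*b^2 := hprod
    rw [hβ2]; ring
  have hq := quad_bound α β m hA hdet
  -- vertices
  have hO : Lc α β ((0,0) : Pt) = ((0,0) : Pt) := by
    rw [Lc_apply]; norm_num
  have hA' : Lc α β ((1,0) : Pt) = ((1,0) : Pt) := by
    rw [Lc_apply]; norm_num
  have hB : Lc α β ((Real.cos θ, Real.sin θ) : Pt) = ((Real.cos θ', Real.sin θ') : Pt) := by
    rw [Lc_apply]
    apply Prod.ext
    · show Real.cos θ + α * Real.sin θ = Real.cos θ'
      rw [hα]; field_simp; ring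
    · show β * Real.sin θ = Real.sin θ'
      rw [hβdef]; field_simp
  -- nondegeneracy
  have hne1 : Lc α β ((1,0) : Pt) ≠ Lc α β ((0,0) : Pt) := by
    rw [hO, hA']; simp [Prod.ext_iff]
  have hne2 : Lc α β ((Real.cos θ, Real.sin θ) : Pt) ≠ Lc α β ((1,0) : Pt) := by
    rw [hB, hA']
    intro h
    have := congrArg Prod.snd h
    simp at this
    exact hs'.ne' this
  have hne3 : Lc α β ((0,0) : Pt) ≠ Lc α β ((Real.cos θ, Real.sin θ) : Pt) := by
    rw [hB, hO]
    intro h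
    have := congrArg Prod.snd h
    simp at this
    exact hs'.ne' this.symm
  have huVFM : MemVFM u (Lc α β ((0,0) : Pt)) (Lc α β ((1,0) : Pt))
      (Lc α β ((Real.cos θ, Real.sin θ) : Pt)) := by
    rw [hO, hA', hB]; exact hu
  have := core_transfer α β m hβ hm0 hq ((0,0) : Pt) ((1,0) : Pt)
    ((Real.cos θ, Real.sin θ) : Pt) hne1 hne2 hne3 C hC hK u huVFM
  rwa [hO, hA', hB] at this

lemma ratio_facts {m b : ℝ} (hm1 : 1 < m) (hb0 : 0 < b) (hb1 : b < 1) :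
    1 < m^2 ∧ 0 < b^2 ∧ b^2 ≤ 1 :=
  ⟨by nlinarith, by nlinarith, by nlinarith⟩


set_option maxHeartbeats 2000000 in
/-- Theorem 3, perturbation of `C₀` along the unit arc: for
`0 < θ, θ + τ ≤ π/3`, if `‖v‖_K ≤ C ‖D²v‖_K` on `V_FM(K)` with `B = (cos θ, sin θ)`, then
on `K̃` with `B̃ = (cos(θ+τ), sin(θ+τ))` the constant is multiplied by
`cos²((θ+τ)/2)/cos²(θ/2)` if `τ < 0`, and by `sin²((θ+τ)/2)/sin²(θ/2)` if `τ > 0`. -/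
theorem stmt_14 (θ τ : ℝ) (hθ0 : 0 < θ) (hθ : θ ≤ π / 3)
    (hτ0 : 0 < θ + τ) (hτ : θ + τ ≤ π / 3) (C : ℝ) (hC : 0 ≤ C)
    (hK : ∀ v : Pt → ℝ,
      MemVFM v ((0, 0) : Pt) ((1, 0) : Pt) ((Real.cos θ, Real.sin θ) : Pt) →
      l2norm v (Tri ((0, 0) : Pt) ((1, 0) : Pt) ((Real.cos θ, Real.sin θ) : Pt)) ≤
        C * h2norm v (Tri ((0, 0) : Pt) ((1, 0) : Pt) ((Real.cos θ, Real.sin θ) : Pt))) :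
    (τ < 0 → ∀ v : Pt → ℝ,
      MemVFM v ((0, 0) : Pt) ((1, 0) : Pt) ((Real.cos (θ + τ), Real.sin (θ + τ)) : Pt) →
      l2norm v (Tri ((0, 0) : Pt) ((1, 0) : Pt) ((Real.cos (θ + τ), Real.sin (θ + τ)) : Pt)) ≤
        (Real.cos ((θ + τ) / 2) ^ 2 / Real.cos (θ / 2) ^ 2) * C *
          h2norm v (Tri ((0, 0) : Pt) ((1, 0) : Pt)
            ((Real.cos (θ + τ), Real.sin (θ + τ)) : Pt))) ∧
    (0 < τ → ∀ v : Pt → ℝ,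
      MemVFM v ((0, 0) : Pt) ((1, 0) : Pt) ((Real.cos (θ + τ), Real.sin (θ + τ)) : Pt) →
      l2norm v (Tri ((0, 0) : Pt) ((1, 0) : Pt) ((Real.cos (θ + τ), Real.sin (θ + τ)) : Pt)) ≤
        (Real.sin ((θ + τ) / 2) ^ 2 / Real.sin (θ / 2) ^ 2) * C *
          h2norm v (Tri ((0, 0) : Pt) ((1, 0) : Pt)
            ((Real.cos (θ + τ), Real.sin (θ + τ)) : Pt))) := by
  have hπ : θ < π := lt_of_le_of_lt hθ (by linarith [Real.pi_pos])
  have hπ' : θ + τ < π := lt_of_le_of_lt hτ (by linarith [Real.pi_pos])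
  have hc2 : 0 < Real.cos (θ/2) := Real.cos_pos_of_mem_Ioo
    ⟨by linarith [Real.pi_pos], by linarith⟩
  have hc2' : 0 < Real.cos ((θ+τ)/2) := Real.cos_pos_of_mem_Ioo
    ⟨by linarith [Real.pi_pos], by linarith⟩
  have hs2 : 0 < Real.sin (θ/2) :=
    Real.sin_pos_of_pos_of_lt_pi (by linarith) (by linarith [Real.pi_pos])
  have hs2' : 0 < Real.sin ((θ+τ)/2) :=
    Real.sin_pos_of_pos_of_lt_pi (by linarith) (by linarith [Real.pi_pos])
  obtain ⟨hprod, htr⟩ := trig_core θ (θ+τ) hθ0 hπ hτ0 hπ'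
  constructor
  · -- τ < 0
    intro hτneg v hv
    set m : ℝ := Real.cos ((θ+τ)/2) / Real.cos (θ/2) with hm
    set b : ℝ := Real.sin ((θ+τ)/2) / Real.sin (θ/2) with hb
    have hmono : Real.cos (θ/2) < Real.cos ((θ+τ)/2) :=
      Real.cos_lt_cos_of_nonneg_of_le_pi (by linarith) (by linarith) (by linarith)
    have hmono2 : Real.sin ((θ+τ)/2) < Real.sin (θ/2) :=
      Real.sin_lt_sin_of_lt_of_le_pi_div_two (by linarith [Real.pi_pos])
        (by linarith [Real.pi_pos]) (by linarith)
    have hm1 : 1 < m := (one_lt_div hc2).mpr hmono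
    have hb1 : b < 1 := (div_lt_one hs2).mpr hmono2
    have hbpos : 0 < b := div_pos hs2' hs2
    have htr' : m^2 + b^2
        = 1 + ((Real.cos (θ+τ) - Real.cos θ)/Real.sin θ)^2 + (Real.sin (θ+τ)/Real.sin θ)^2 := by
      linear_combination htr
    obtain ⟨hm2', hb2', hb1'⟩ := ratio_facts hm1 hbpos hb1
    have key := case_step θ (θ+τ) hθ0 hθ hτ0 hτ m b (zero_le_one.trans hm1.le)
      hprod htr' hm2' hb2' hb1' C hC hK v hv
    have hmsq : m^2 = Real.cos ((θ + τ) / 2) ^ 2 / Real.cos (θ / 2) ^ 2 := by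
      rw [hm, div_pow]
    rwa [hmsq] at key
  · -- τ > 0
    intro hτpos v hv
    set m : ℝ := Real.sin ((θ+τ)/2) / Real.sin (θ/2) with hm
    set b : ℝ := Real.cos ((θ+τ)/2) / Real.cos (θ/2) with hb
    have hmono : Real.cos ((θ+τ)/2) < Real.cos (θ/2) :=
      Real.cos_lt_cos_of_nonneg_of_le_pi (by linarith) (by linarith) (by linarith)
    have hmono2 : Real.sin (θ/2) < Real.sin ((θ+τ)/2) :=
      Real.sin_lt_sin_of_lt_of_le_pi_div_two (by linarith [Real.pi_pos])
        (by linarith [Real.pi_pos]) (by linarith)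
    have hm1 : 1 < m := (one_lt_div hs2).mpr hmono2
    have hb1 : b < 1 := (div_lt_one hc2).mpr hmono
    have hbpos : 0 < b := div_pos hc2' hc2
    have hprod' : (Real.sin (θ+τ) / Real.sin θ)^2 = m^2 * b^2 := by
      linear_combination hprod
    have htr' : m^2 + b^2
        = 1 + ((Real.cos (θ+τ) - Real.cos θ)/Real.sin θ)^2 + (Real.sin (θ+τ)/Real.sin θ)^2 := by
      linear_combination htr
    obtain ⟨hm2', hb2', hb1'⟩ := ratio_facts hm1 hbpos hb1
    have key := case_step θ (θ+τ) hθ0 hθ hτ0 hτ m b (zero_le_one.trans hm1.le)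
      hprod' htr' hm2' hb2' hb1' C hC hK v hv
    have hmsq : m^2 = Real.sin ((θ + τ) / 2) ^ 2 / Real.sin (θ / 2) ^ 2 := by
      rw [hm, div_pow]
    rwa [hmsq] at key
end
end

section
/- (Theorem 4, perturbation of C_CR in the x-direction) Let b > 0, a ∈ ℝ, and ε ∈ ℝ with |ε| < 1/2. Let K be the triangle with vertices (0,0), (1,0), (a, b) and K̃ the triangle with vertices (0,0), (1,0), (a + bε, b). If C ≥ 0 satisfies ‖w‖_K ≤ C·‖∇w‖_K for all w ∈ V_CR(K), then ‖w̃‖_{K̃} ≤ (1 + |ε|/2 + 3ε²/8)·C·‖∇w̃‖_{K̃} for all w̃ ∈ V_CR(K̃); that is, C_CR(K̃) ≤ (1 + |ε|/2 + 3ε²/8)·C_CR(K). -/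
open MeasureTheory Real

noncomputable section

namespace Stmt15

lemma qmap_linear (ε : ℝ) : IsLinearMap ℝ (Qmap ε 1) := by
  constructor <;> intros <;> simp [Qmap, Prod.ext_iff, smul_eq_mul] <;> ring

/-- The shear as a continuous linear map. -/
def shearL (ε : ℝ) : Pt →L[ℝ] Pt :=
  LinearMap.toContinuousLinearMap (IsLinearMap.mk' _ (qmap_linear ε))

lemma shearL_coe (ε : ℝ) : ⇑(shearL ε) = Qmap ε 1 := by
  ext p <;> simp [shearL]

lemma qmap_inj (ε : ℝ) : Function.Injective (Qmap ε 1) := by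
  intro p q h
  have := congrArg (Qmap (-ε) 1) h
  simpa [Qmap, Prod.ext_iff] using this

lemma shear_mp (ε : ℝ) : MeasurePreserving (Qmap ε 1) (volume : Measure Pt) volume := by
  have hT : MeasurePreserving (fun p : ℝ × ℝ => (p.1, p.2 + ε * p.1))
      ((volume : Measure ℝ).prod volume) ((volume : Measure ℝ).prod volume) :=
    (MeasurePreserving.id volume).skew_product (by fun_prop)
      (Filter.Eventually.of_forall fun a => map_add_right_eq_self volume (ε * a))
  have hswap : MeasurePreserving (Prod.swap : ℝ × ℝ → ℝ × ℝ)
      ((volume : Measure ℝ).prod volume) ((volume : Measure ℝ).prod volume) :=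
    Measure.measurePreserving_swap
  have hfun : (Qmap ε 1 : Pt → Pt)
      = Prod.swap ∘ (fun p : ℝ × ℝ => (p.1, p.2 + ε * p.1)) ∘ Prod.swap := by
    funext p
    simp [Qmap, Prod.swap]
  rw [Measure.volume_eq_prod ℝ ℝ, hfun]
  exact (hswap.comp hT).comp hswap

/-- The shear as a homeomorphism. -/
def shearHomeo (ε : ℝ) : Pt ≃ₜ Pt where
  toFun := Qmap ε 1
  invFun := Qmap (-ε) 1
  left_inv p := by simp [Qmap, Prod.ext_iff]
  right_inv p := by simp [Qmap, Prod.ext_iff]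
  continuous_toFun := by unfold Qmap; fun_prop
  continuous_invFun := by unfold Qmap; fun_prop

lemma shear_emb (ε : ℝ) : MeasurableEmbedding (Qmap ε 1) :=
  (shearHomeo ε).toMeasurableEquiv.measurableEmbedding

lemma image_tri (ε : ℝ) (O A B : Pt) :
    Qmap ε 1 '' Tri O A B = Tri (Qmap ε 1 O) (Qmap ε 1 A) (Qmap ε 1 B) := by
  unfold Tri
  rw [(qmap_linear ε).image_convexHull]
  congr 1
  simp [Set.image_insert_eq]

lemma elen_pos {v : Pt} (hv : v ≠ 0) : 0 < elen v := by
  have h : v.1 ≠ 0 ∨ v.2 ≠ 0 := by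
    by_contra h; push_neg at h; exact hv (Prod.ext h.1 h.2)
  unfold elen
  rcases h with h | h <;> positivity

end Stmt15
open Stmt15

namespace Stmt15

lemma qmap_hasFDeriv (ε : ℝ) (p : Pt) : HasFDerivAt (Qmap ε 1) (shearL ε) p := by
  have h := (shearL ε).hasFDerivAt (x := p)
  rwa [shearL_coe] at h

lemma comp_fderiv {ε : ℝ} {w : Pt → ℝ} {p : Pt} (hw : DifferentiableAt ℝ w (Qmap ε 1 p))
    (v : Pt) :
    fderiv ℝ (fun x => w (Qmap ε 1 x)) p v = fderiv ℝ w (Qmap ε 1 p) (Qmap ε 1 v) := by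
  have h := (hw.hasFDerivAt.comp p (qmap_hasFDeriv ε p)).fderiv
  rw [show (fun x => w (Qmap ε 1 x)) = w ∘ Qmap ε 1 from rfl, h]
  simp [shearL_coe]

lemma pdx_comp {ε : ℝ} {w : Pt → ℝ} {p : Pt} (hw : DifferentiableAt ℝ w (Qmap ε 1 p)) :
    pdx (fun x => w (Qmap ε 1 x)) p = pdx w (Qmap ε 1 p) := by
  unfold pdx
  rw [comp_fderiv hw]
  norm_num [Qmap]

lemma pdy_comp {ε : ℝ} {w : Pt → ℝ} {p : Pt} (hw : DifferentiableAt ℝ w (Qmap ε 1 p)) :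
    pdy (fun x => w (Qmap ε 1 x)) p
      = ε * pdx w (Qmap ε 1 p) + pdy w (Qmap ε 1 p) := by
  unfold pdy pdx
  rw [comp_fderiv hw]
  have h1 : Qmap ε 1 ((0, 1) : Pt) = ε • ((1, 0) : Pt) + ((0, 1) : Pt) := by
    simp [Qmap, Prod.ext_iff]
  rw [h1, map_add, ContinuousLinearMap.map_smul, smul_eq_mul]

lemma edgeInt_comp (ε : ℝ) (g : Pt → ℝ) (P Q : Pt) (hPQ : P ≠ Q)
    (h : edgeInt g (Qmap ε 1 P) (Qmap ε 1 Q) = 0) :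
    edgeInt (fun p => g (Qmap ε 1 p)) P Q = 0 := by
  have hl := qmap_linear ε
  have hint : ∀ t : ℝ, g (Qmap ε 1 (P + t • (Q - P)))
      = g (Qmap ε 1 P + t • (Qmap ε 1 Q - Qmap ε 1 P)) := by
    intro t
    rw [hl.map_add, hl.map_smul, hl.map_sub]
  have hne : Qmap ε 1 Q - Qmap ε 1 P ≠ 0 :=
    sub_ne_zero.mpr fun hc => hPQ (qmap_inj ε hc.symm) |>.elim
  unfold edgeInt at h ⊢
  have hI : ∫ t in (0:ℝ)..1, g (Qmap ε 1 P + t • (Qmap ε 1 Q - Qmap ε 1 P)) = 0 := by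
    rcases mul_eq_zero.mp h with h' | h'
    · exact absurd h' (ne_of_gt (elen_pos hne))
    · exact h'
  simp only [hint, hI, mul_zero]

lemma key_ineq (ε x y : ℝ) :
    x ^ 2 + (ε * x + y) ^ 2 ≤ (1 + |ε| / 2 + 3 * ε ^ 2 / 8) ^ 2 * (x ^ 2 + y ^ 2) := by
  have h1 : 2 * (ε * x) * y ≤ |ε| * (x ^ 2 + y ^ 2) := by
    have h2 : 2 * (ε * x) * y ≤ |2 * (ε * x) * y| := le_abs_self _
    have h3 : |2 * (ε * x) * y| = 2 * |ε| * (|x| * |y|) := by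
      rw [abs_mul, abs_mul, abs_mul]
      simp [abs_of_nonneg]
      ring
    nlinarith [sq_nonneg (|x| - |y|), sq_abs x, sq_abs y, abs_nonneg ε]
  have h4 : x ^ 2 + (ε * x + y) ^ 2 ≤ (1 + |ε| + ε ^ 2) * (x ^ 2 + y ^ 2) := by
    nlinarith [h1, sq_abs ε, mul_nonneg (mul_nonneg (abs_nonneg ε) (abs_nonneg ε)) (sq_nonneg y)]
  have h5 : (1 + |ε| + ε ^ 2) ≤ (1 + |ε| / 2 + 3 * ε ^ 2 / 8) ^ 2 := by
    nlinarith [abs_nonneg ε, sq_abs ε, mul_nonneg (abs_nonneg ε) (sq_nonneg ε), sq_nonneg (ε ^ 2)]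
  nlinarith [h4, h5, add_nonneg (sq_nonneg x) (sq_nonneg y)]

end Stmt15
/-- Theorem 4, perturbation of `C_CR` in the `x`-direction: for `|ε| < 1/2`,
if `‖w‖_K ≤ C ‖∇w‖_K` on `V_CR(K)` with third vertex `(a,b)`, then on the triangle `K̃` with
third vertex `(a + bε, b)` one has `‖w̃‖_{K̃} ≤ (1 + |ε|/2 + 3ε²/8) C ‖∇w̃‖_{K̃}`. -/
theorem stmt_15 (a b ε : ℝ) (hb : 0 < b) (hε : |ε| < 1 / 2) (C : ℝ) (hC : 0 ≤ C)
    (hK : ∀ w : Pt → ℝ, MemVCR w ((0, 0) : Pt) ((1, 0) : Pt) ((a, b) : Pt) →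
      l2norm w (Tri ((0, 0) : Pt) ((1, 0) : Pt) ((a, b) : Pt)) ≤
        C * h1norm w (Tri ((0, 0) : Pt) ((1, 0) : Pt) ((a, b) : Pt))) :
    ∀ w : Pt → ℝ, MemVCR w ((0, 0) : Pt) ((1, 0) : Pt) ((a + b * ε, b) : Pt) →
      l2norm w (Tri ((0, 0) : Pt) ((1, 0) : Pt) ((a + b * ε, b) : Pt)) ≤
        (1 + |ε| / 2 + 3 * ε ^ 2 / 8) * C *
          h1norm w (Tri ((0, 0) : Pt) ((1, 0) : Pt) ((a + b * ε, b) : Pt)) := by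
  intro wt hwt
  obtain ⟨⟨U, hUopen, hKU, hwU⟩, he1, he2, he3⟩ := hwt
  -- vertex images under the shear
  have hSO : Qmap ε 1 ((0, 0) : Pt) = ((0, 0) : Pt) := by simp [Qmap]
  have hSA : Qmap ε 1 ((1, 0) : Pt) = ((1, 0) : Pt) := by simp [Qmap]
  have hSB : Qmap ε 1 ((a, b) : Pt) = ((a + b * ε, b) : Pt) := by
    simp [Qmap, Prod.ext_iff]; ring
  have himg : Qmap ε 1 '' Tri ((0, 0) : Pt) ((1, 0) : Pt) ((a, b) : Pt)
      = Tri ((0, 0) : Pt) ((1, 0) : Pt) ((a + b * ε, b) : Pt) := by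
    rw [image_tri, hSO, hSA, hSB]
  have hSmem : ∀ p ∈ Tri ((0, 0) : Pt) ((1, 0) : Pt) ((a, b) : Pt), Qmap ε 1 p ∈ U :=
    fun p hp => hKU (himg ▸ Set.mem_image_of_mem (Qmap ε 1) hp)
  have hScd : ContDiff ℝ 1 (Qmap ε 1) := by
    rw [← shearL_coe]; exact (shearL ε).contDiff
  -- the pulled-back function
  have hsmooth : Smooth1 (fun p => wt (Qmap ε 1 p))
      (Tri ((0, 0) : Pt) ((1, 0) : Pt) ((a, b) : Pt)) := by
    refine ⟨Qmap ε 1 ⁻¹' U, hUopen.preimage hScd.continuous, fun p hp => hSmem p hp, ?_⟩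
    exact hwU.comp hScd.contDiffOn (Set.mapsTo_preimage _ _)
  have hOA : ((0, 0) : Pt) ≠ ((1, 0) : Pt) := by simp [Prod.ext_iff]
  have hAB : ((1, 0) : Pt) ≠ ((a, b) : Pt) := fun h => hb.ne (congrArg Prod.snd h)
  have hBO : ((a, b) : Pt) ≠ ((0, 0) : Pt) := fun h => hb.ne' (congrArg Prod.snd h)
  have hmem : MemVCR (fun p => wt (Qmap ε 1 p))
      ((0, 0) : Pt) ((1, 0) : Pt) ((a, b) : Pt) := by
    refine ⟨hsmooth, ?_, ?_, ?_⟩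
    · exact edgeInt_comp ε wt _ _ hOA (by rw [hSO, hSA]; exact he1)
    · exact edgeInt_comp ε wt _ _ hAB (by rw [hSA, hSB]; exact he2)
    · exact edgeInt_comp ε wt _ _ hBO (by rw [hSB, hSO]; exact he3)
  have hbound := hK _ hmem
  -- change of variables
  have hCOV : ∀ g : Pt → ℝ,
      ∫ p in Tri ((0, 0) : Pt) ((1, 0) : Pt) ((a + b * ε, b) : Pt), g p
        = ∫ p in Tri ((0, 0) : Pt) ((1, 0) : Pt) ((a, b) : Pt), g (Qmap ε 1 p) := by
    intro g
    rw [← himg]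
    exact (shear_mp ε).setIntegral_image_emb (shear_emb ε) g _
  have hl2 : l2sq wt (Tri ((0, 0) : Pt) ((1, 0) : Pt) ((a + b * ε, b) : Pt))
      = l2sq (fun p => wt (Qmap ε 1 p)) (Tri ((0, 0) : Pt) ((1, 0) : Pt) ((a, b) : Pt)) := by
    unfold l2sq
    exact hCOV (fun p => wt p ^ 2)
  -- gradient identity
  have hdiffat : ∀ q ∈ U, DifferentiableAt ℝ wt q := fun q hq =>
    (hwU.differentiableOn one_ne_zero).differentiableAt (hUopen.mem_nhds hq)
  have hgrad : ∀ p ∈ Tri ((0, 0) : Pt) ((1, 0) : Pt) ((a, b) : Pt),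
      pdx (fun p => wt (Qmap ε 1 p)) p ^ 2 + pdy (fun p => wt (Qmap ε 1 p)) p ^ 2
        = (fun q => pdx wt q ^ 2 + (ε * pdx wt q + pdy wt q) ^ 2) (Qmap ε 1 p) := by
    intro p hp
    have hd := hdiffat _ (hSmem p hp)
    rw [pdx_comp hd, pdy_comp hd]
  have hKcpt : IsCompact (Tri ((0, 0) : Pt) ((1, 0) : Pt) ((a, b) : Pt)) :=
    Set.Finite.isCompact_convexHull (𝕜 := ℝ) (Set.toFinite _)
  have hK'cpt : IsCompact (Tri ((0, 0) : Pt) ((1, 0) : Pt) ((a + b * ε, b) : Pt)) :=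
    Set.Finite.isCompact_convexHull (𝕜 := ℝ) (Set.toFinite _)
  have hKmeas : MeasurableSet (Tri ((0, 0) : Pt) ((1, 0) : Pt) ((a, b) : Pt)) :=
    hKcpt.isClosed.measurableSet
  have hK'meas : MeasurableSet (Tri ((0, 0) : Pt) ((1, 0) : Pt) ((a + b * ε, b) : Pt)) :=
    hK'cpt.isClosed.measurableSet
  have hh1 : h1sq (fun p => wt (Qmap ε 1 p)) (Tri ((0, 0) : Pt) ((1, 0) : Pt) ((a, b) : Pt))
      = ∫ q in Tri ((0, 0) : Pt) ((1, 0) : Pt) ((a + b * ε, b) : Pt),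
          (pdx wt q ^ 2 + (ε * pdx wt q + pdy wt q) ^ 2) := by
    unfold h1sq
    rw [MeasureTheory.setIntegral_congr_fun hKmeas hgrad]
    exact (hCOV (fun q => pdx wt q ^ 2 + (ε * pdx wt q + pdy wt q) ^ 2)).symm
  -- integrability and monotonicity
  have hfdC : ContinuousOn (fderiv ℝ wt) U := hwU.continuousOn_fderiv_of_isOpen hUopen le_rfl
  have hpdxC : ContinuousOn (pdx wt) U := hfdC.clm_apply continuousOn_const
  have hpdyC : ContinuousOn (pdy wt) U := hfdC.clm_apply continuousOn_const
  have hpdxC' : ContinuousOn (pdx wt)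
      (Tri ((0, 0) : Pt) ((1, 0) : Pt) ((a + b * ε, b) : Pt)) := hpdxC.mono hKU
  have hpdyC' : ContinuousOn (pdy wt)
      (Tri ((0, 0) : Pt) ((1, 0) : Pt) ((a + b * ε, b) : Pt)) := hpdyC.mono hKU
  have hFint : IntegrableOn (fun q => pdx wt q ^ 2 + (ε * pdx wt q + pdy wt q) ^ 2)
      (Tri ((0, 0) : Pt) ((1, 0) : Pt) ((a + b * ε, b) : Pt)) :=
    ((hpdxC'.pow 2).add (((continuousOn_const.mul hpdxC').add hpdyC').pow 2)).integrableOn_compact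
      hK'cpt
  have hGint : IntegrableOn (fun q => pdx wt q ^ 2 + pdy wt q ^ 2)
      (Tri ((0, 0) : Pt) ((1, 0) : Pt) ((a + b * ε, b) : Pt)) :=
    ((hpdxC'.pow 2).add (hpdyC'.pow 2)).integrableOn_compact hK'cpt
  have hc0 : (0 : ℝ) ≤ 1 + |ε| / 2 + 3 * ε ^ 2 / 8 := by positivity
  have hle : (∫ q in Tri ((0, 0) : Pt) ((1, 0) : Pt) ((a + b * ε, b) : Pt),
        (pdx wt q ^ 2 + (ε * pdx wt q + pdy wt q) ^ 2))
      ≤ (1 + |ε| / 2 + 3 * ε ^ 2 / 8) ^ 2 *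
          h1sq wt (Tri ((0, 0) : Pt) ((1, 0) : Pt) ((a + b * ε, b) : Pt)) := by
    unfold h1sq
    rw [← MeasureTheory.integral_const_mul]
    exact MeasureTheory.setIntegral_mono_on hFint (hGint.const_mul _) hK'meas
      (fun q _ => key_ineq ε (pdx wt q) (pdy wt q))
  have hh1le : h1sq (fun p => wt (Qmap ε 1 p)) (Tri ((0, 0) : Pt) ((1, 0) : Pt) ((a, b) : Pt))
      ≤ (1 + |ε| / 2 + 3 * ε ^ 2 / 8) ^ 2 *
          h1sq wt (Tri ((0, 0) : Pt) ((1, 0) : Pt) ((a + b * ε, b) : Pt)) := by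
    rw [hh1]; exact hle
  have h1n : h1norm (fun p => wt (Qmap ε 1 p)) (Tri ((0, 0) : Pt) ((1, 0) : Pt) ((a, b) : Pt))
      ≤ (1 + |ε| / 2 + 3 * ε ^ 2 / 8) *
          h1norm wt (Tri ((0, 0) : Pt) ((1, 0) : Pt) ((a + b * ε, b) : Pt)) := by
    unfold h1norm
    calc Real.sqrt (h1sq (fun p => wt (Qmap ε 1 p))
          (Tri ((0, 0) : Pt) ((1, 0) : Pt) ((a, b) : Pt)))
        ≤ Real.sqrt ((1 + |ε| / 2 + 3 * ε ^ 2 / 8) ^ 2 *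
            h1sq wt (Tri ((0, 0) : Pt) ((1, 0) : Pt) ((a + b * ε, b) : Pt))) :=
          Real.sqrt_le_sqrt hh1le
      _ = (1 + |ε| / 2 + 3 * ε ^ 2 / 8) *
            Real.sqrt (h1sq wt (Tri ((0, 0) : Pt) ((1, 0) : Pt) ((a + b * ε, b) : Pt))) := by
          rw [Real.sqrt_mul (by positivity), Real.sqrt_sq hc0]
  have hl2n : l2norm wt (Tri ((0, 0) : Pt) ((1, 0) : Pt) ((a + b * ε, b) : Pt))
      = l2norm (fun p => wt (Qmap ε 1 p)) (Tri ((0, 0) : Pt) ((1, 0) : Pt) ((a, b) : Pt)) := by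
    unfold l2norm; rw [hl2]
  calc l2norm wt (Tri ((0, 0) : Pt) ((1, 0) : Pt) ((a + b * ε, b) : Pt))
      = l2norm (fun p => wt (Qmap ε 1 p)) (Tri ((0, 0) : Pt) ((1, 0) : Pt) ((a, b) : Pt)) := hl2n
    _ ≤ C * h1norm (fun p => wt (Qmap ε 1 p))
          (Tri ((0, 0) : Pt) ((1, 0) : Pt) ((a, b) : Pt)) := hbound
    _ ≤ C * ((1 + |ε| / 2 + 3 * ε ^ 2 / 8) *
          h1norm wt (Tri ((0, 0) : Pt) ((1, 0) : Pt) ((a + b * ε, b) : Pt))) :=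
        mul_le_mul_of_nonneg_left h1n hC
    _ = (1 + |ε| / 2 + 3 * ε ^ 2 / 8) * C *
          h1norm wt (Tri ((0, 0) : Pt) ((1, 0) : Pt) ((a + b * ε, b) : Pt)) := by ring
end
end

section
/- Let b > 0, a ∈ ℝ, and ε ∈ ℝ. Let K be the triangle with vertices (0,0), (1,0), (a, b) and K̃ the triangle with vertices (0,0), (1,0), (a + bε, b). If C ≥ 0 satisfies ‖w‖_K ≤ C·‖∇w‖_K for all w ∈ V_CR(K), then ‖w̃‖_{K̃} ≤ √((ε² + 2 + √(ε⁴ + 4ε²))/2)·C·‖∇w̃‖_{K̃} for all w̃ ∈ V_CR(K̃). -/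
open MeasureTheory Real

noncomputable section

/-- The shear map as a continuous linear map. -/
def Qc (ε : ℝ) : Pt →L[ℝ] Pt :=
  (ContinuousLinearMap.fst ℝ ℝ ℝ + ε • ContinuousLinearMap.snd ℝ ℝ ℝ).prod
    (ContinuousLinearMap.snd ℝ ℝ ℝ)

lemma Qc_apply (ε : ℝ) (p : Pt) : Qc ε p = (p.1 + ε * p.2, p.2) := rfl

lemma Qc_det (ε : ℝ) : LinearMap.det ((Qc ε) : Pt →ₗ[ℝ] Pt) = 1 := by
  let b := Module.Basis.finTwoProd ℝ
  rw [← LinearMap.det_toMatrix b, Matrix.det_fin_two]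
  simp [LinearMap.toMatrix_apply, b, Qc_apply, Module.Basis.coe_finTwoProd_repr, Fin.isValue,
    Module.Basis.finTwoProd_zero, Module.Basis.finTwoProd_one]

lemma Qc_inj (ε : ℝ) : Function.Injective (Qc ε) := by
  intro p q h
  have h1 := congrArg Prod.fst h
  have h2 := congrArg Prod.snd h
  simp only [Qc_apply] at h1 h2
  ext
  · rw [h2] at h1; linarith
  · exact h2

lemma ptwise (ε X Y : ℝ) :
    X ^ 2 + (ε * X + Y) ^ 2 ≤
      ((ε ^ 2 + 2 + Real.sqrt (ε ^ 4 + 4 * ε ^ 2)) / 2) * (X ^ 2 + Y ^ 2) := by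
  have h0 : (0:ℝ) ≤ ε ^ 4 + 4 * ε ^ 2 := by positivity
  set t := Real.sqrt (ε ^ 4 + 4 * ε ^ 2) with ht
  have ht0 : 0 ≤ t := Real.sqrt_nonneg _
  have ht2 : t ^ 2 = ε ^ 4 + 4 * ε ^ 2 := Real.sq_sqrt h0
  have hte : ε ^ 2 ≤ t := by
    nlinarith [sq_nonneg (t - ε ^ 2), sq_nonneg ε]
  rcases eq_or_lt_of_le hte with h | h
  · have hε : ε = 0 := by nlinarith
    simp [hε]
    nlinarith [Real.sqrt_nonneg (ε ^ 4 + 4 * ε ^ 2), sq_nonneg X, sq_nonneg Y]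
  · have key : 0 ≤ ((t - ε ^ 2) * X - 2 * ε * Y) ^ 2 := sq_nonneg _
    nlinarith [key, mul_pos (sub_pos.2 h) (sub_pos.2 h)]

lemma elen_pos_of_snd_ne {v : Pt} (hv : v.2 ≠ 0) : 0 < elen v := by
  apply Real.sqrt_pos.2
  have : 0 < v.2 ^ 2 := by positivity
  nlinarith [sq_nonneg v.1]

/-- Transfer of vanishing edge integrals under an injective-on-the-edge linear map. -/
lemma edgeInt_comp_eq_zero {g : Pt → ℝ} {ε : ℝ} {P Q : Pt}
    (hlen : elen (Qc ε Q - Qc ε P) ≠ 0) (hg : edgeInt g (Qc ε P) (Qc ε Q) = 0) :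
    edgeInt (fun p => g (Qc ε p)) P Q = 0 := by
  have hI : (∫ t in (0:ℝ)..1, g (Qc ε P + t • (Qc ε Q - Qc ε P))) = 0 := by
    have := hg
    unfold edgeInt at this
    exact (mul_eq_zero.1 this).resolve_left hlen
  unfold edgeInt
  have : (fun t : ℝ => g (Qc ε (P + t • (Q - P)))) =
      fun t : ℝ => g (Qc ε P + t • (Qc ε Q - Qc ε P)) := by
    funext t
    congr 1
    rw [map_add, (Qc ε).map_smul, map_sub]
  rw [show (∫ t in (0:ℝ)..1, g (Qc ε (P + t • (Q - P)))) =
      ∫ t in (0:ℝ)..1, g (Qc ε P + t • (Qc ε Q - Qc ε P)) from by rw [this], hI, mul_zero]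

/-- Change of variables for the shear map. -/
lemma cov_s16 (ε : ℝ) {s : Set Pt} (hs : MeasurableSet s) (g : Pt → ℝ) :
    (∫ p in (Qc ε) '' s, g p) = ∫ p in s, g (Qc ε p) := by
  have h := integral_image_eq_integral_abs_det_fderiv_smul (μ := volume) hs
    (fun x _ => ((Qc ε).hasFDerivAt (x := x)).hasFDerivWithinAt)
    ((Qc_inj ε).injOn) g
  simpa [ContinuousLinearMap.det, Qc_det] using h

lemma Qc_injective' (ε : ℝ) : Function.Injective (Qc ε) := Qc_inj ε

/-- if `‖w‖_K ≤ C ‖∇w‖_K` on `V_CR(K)` with third vertex `(a,b)`, then on the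
triangle `K̃` with third vertex `(a + bε, b)` one has
`‖w̃‖_{K̃} ≤ √((ε² + 2 + √(ε⁴ + 4ε²))/2) C ‖∇w̃‖_{K̃}`. -/
theorem stmt_16 (a b ε : ℝ) (hb : 0 < b) (C : ℝ) (hC : 0 ≤ C)
    (hK : ∀ w : Pt → ℝ, MemVCR w ((0, 0) : Pt) ((1, 0) : Pt) ((a, b) : Pt) →
      l2norm w (Tri ((0, 0) : Pt) ((1, 0) : Pt) ((a, b) : Pt)) ≤
        C * h1norm w (Tri ((0, 0) : Pt) ((1, 0) : Pt) ((a, b) : Pt))) :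
    ∀ w : Pt → ℝ, MemVCR w ((0, 0) : Pt) ((1, 0) : Pt) ((a + b * ε, b) : Pt) →
      l2norm w (Tri ((0, 0) : Pt) ((1, 0) : Pt) ((a + b * ε, b) : Pt)) ≤
        Real.sqrt ((ε ^ 2 + 2 + Real.sqrt (ε ^ 4 + 4 * ε ^ 2)) / 2) * C *
          h1norm w (Tri ((0, 0) : Pt) ((1, 0) : Pt) ((a + b * ε, b) : Pt)) := by
  intro w hw
  set O : Pt := ((0,0) : Pt) with hOdef
  set A : Pt := ((1,0) : Pt) with hAdef
  set B : Pt := ((a,b) : Pt) with hBdef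
  set B' : Pt := ((a + b * ε, b) : Pt) with hB'def
  obtain ⟨⟨U, hUopen, hKU, hCD⟩, h12, h23, h31⟩ := hw
  have hO : Qc ε O = O := by simp [Qc_apply, hOdef]
  have hA : Qc ε A = A := by simp [Qc_apply, hAdef]
  have hB : Qc ε B = B' := by
    simp only [Qc_apply, hBdef, hB'def]
    rw [mul_comm]
  -- the image of the reference triangle is the perturbed one
  have himg : Qc ε '' Tri O A B = Tri O A B' := by
    unfold Tri
    rw [show (Qc ε : Pt → Pt) '' (convexHull ℝ {O, A, B}) =
        ((Qc ε).toLinearMap : Pt → Pt) '' (convexHull ℝ {O, A, B}) from rfl,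
      LinearMap.image_convexHull]
    congr 1
    rw [Set.image_insert_eq, Set.image_insert_eq, Set.image_singleton]
    simp only [ContinuousLinearMap.coe_coe]
    rw [hO, hA, hB]
  have hfin : ({O, A, B} : Set Pt).Finite :=
    (Set.finite_singleton B).insert A |>.insert O
  have hfin' : ({O, A, B'} : Set Pt).Finite :=
    (Set.finite_singleton B').insert A |>.insert O
  have hKcomp : IsCompact (Tri O A B) := hfin.isCompact_convexHull ℝ
  have hK'comp : IsCompact (Tri O A B') := hfin'.isCompact_convexHull ℝ
  have hKmeas : MeasurableSet (Tri O A B) := hKcomp.measurableSet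
  have hK'meas : MeasurableSet (Tri O A B') := hK'comp.measurableSet
  set w' : Pt → ℝ := fun p => w (Qc ε p) with hw'def
  have hmem : ∀ p ∈ Tri O A B, Qc ε p ∈ Tri O A B' := by
    intro p hp
    rw [← himg]
    exact Set.mem_image_of_mem _ hp
  -- membership of w' in V_CR(K)
  have hVCR : MemVCR w' O A B := by
    refine ⟨⟨(Qc ε) ⁻¹' U, hUopen.preimage (Qc ε).continuous,
      fun p hp => hKU (hmem p hp), ?_⟩, ?_, ?_, ?_⟩
    · exact hCD.comp ((Qc ε).contDiff.contDiffOn) (fun x hx => hx)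
    · apply edgeInt_comp_eq_zero (ε := ε)
      · rw [hO, hA]
        show elen (((1:ℝ),(0:ℝ)) - ((0:ℝ),(0:ℝ))) ≠ 0
        unfold elen
        norm_num [Prod.fst_sub, Prod.snd_sub]
      · rw [hO, hA]; exact h12
    · apply edgeInt_comp_eq_zero (ε := ε)
      · rw [hA, hB]
        apply ne_of_gt
        apply elen_pos_of_snd_ne
        show b - 0 ≠ 0
        simpa using hb.ne'
      · rw [hA, hB]; exact h23
    · apply edgeInt_comp_eq_zero (ε := ε)
      · rw [hO, hB]
        apply ne_of_gt
        apply elen_pos_of_snd_ne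
        show 0 - b ≠ 0
        simpa using hb.ne'
      · rw [hO, hB]; exact h31
  have hmain := hK w' hVCR
  -- equality of L² norms
  have e1 : l2sq w (Tri O A B') = l2sq w' (Tri O A B) := by
    unfold l2sq
    rw [← himg]
    exact cov_s16 ε hKmeas (fun p => w p ^ 2)
  -- differentiability of w on the perturbed triangle
  have hdiff : ∀ p ∈ Tri O A B', DifferentiableAt ℝ w p := fun p hp =>
    (hCD.differentiableOn one_ne_zero).differentiableAt (hUopen.mem_nhds (hKU hp))
  -- derivative identities
  have hder : ∀ p ∈ Tri O A B,
      pdx w' p = pdx w (Qc ε p) ∧ pdy w' p = ε * pdx w (Qc ε p) + pdy w (Qc ε p) := by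
    intro p hp
    have hq := hmem p hp
    have hD := ((hdiff _ hq).hasFDerivAt.comp p ((Qc ε).hasFDerivAt)).fderiv
    have hfder : fderiv ℝ w' p = (fderiv ℝ w (Qc ε p)).comp (Qc ε) := hD
    have hv1 : Qc ε ((1:ℝ),(0:ℝ)) = ((1:ℝ),(0:ℝ)) := by simp [Qc_apply]
    have hv2 : Qc ε ((0:ℝ),(1:ℝ)) = ((ε:ℝ),(1:ℝ)) := by simp [Qc_apply]
    have hsplit : ((ε:ℝ),(1:ℝ)) = ε • (((1:ℝ),(0:ℝ)) : Pt) + (((0:ℝ),(1:ℝ)) : Pt) := by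
      simp [Prod.ext_iff]
    constructor
    · show fderiv ℝ w' p ((1:ℝ),(0:ℝ)) = _
      rw [hfder, ContinuousLinearMap.comp_apply, hv1]
      rfl
    · show fderiv ℝ w' p ((0:ℝ),(1:ℝ)) = _
      rw [hfder, ContinuousLinearMap.comp_apply, hv2, hsplit, map_add,
        (fderiv ℝ w (Qc ε p)).map_smul, smul_eq_mul]
      rfl
  set lam : ℝ := (ε ^ 2 + 2 + Real.sqrt (ε ^ 4 + 4 * ε ^ 2)) / 2 with hlamdef
  have hlam0 : 0 ≤ lam := by
    rw [hlamdef]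
    positivity
  set G1 : Pt → ℝ := fun q => (pdx w q) ^ 2 + (ε * pdx w q + pdy w q) ^ 2 with hG1def
  set G2 : Pt → ℝ := fun q => lam * ((pdx w q) ^ 2 + (pdy w q) ^ 2) with hG2def
  -- continuity of the partial derivatives
  have hfc : ContinuousOn (fderiv ℝ w) U := hCD.continuousOn_fderiv_of_isOpen hUopen le_rfl
  have hpdx : ContinuousOn (pdx w) U :=
    (ContinuousLinearMap.apply ℝ ℝ (((1:ℝ),(0:ℝ)) : Pt)).continuous.comp_continuousOn hfc
  have hpdy : ContinuousOn (pdy w) U :=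
    (ContinuousLinearMap.apply ℝ ℝ (((0:ℝ),(1:ℝ)) : Pt)).continuous.comp_continuousOn hfc
  have hG1c : ContinuousOn G1 U :=
    (hpdx.pow 2).add (((continuousOn_const.mul hpdx).add hpdy).pow 2)
  have hG2c : ContinuousOn G2 U :=
    continuousOn_const.mul ((hpdx.pow 2).add (hpdy.pow 2))
  have hG1int : IntegrableOn G1 (Tri O A B') volume :=
    (hG1c.mono hKU).integrableOn_compact hK'comp
  have hG2int : IntegrableOn G2 (Tri O A B') volume :=
    (hG2c.mono hKU).integrableOn_compact hK'comp
  -- comparing Dirichlet energies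
  have e2 : h1sq w' (Tri O A B) = ∫ p in Tri O A B', G1 p := by
    unfold h1sq
    rw [show (∫ p in Tri O A B, ((pdx w' p) ^ 2 + (pdy w' p) ^ 2)) =
        ∫ p in Tri O A B, G1 (Qc ε p) from
      setIntegral_congr_fun hKmeas (fun p hp => by
        rw [hG1def]; simp only []; rw [(hder p hp).1, (hder p hp).2]),
      ← cov_s16 ε hKmeas G1, himg]
  have e4 : (∫ p in Tri O A B', G1 p) ≤ ∫ p in Tri O A B', G2 p :=
    setIntegral_mono_on hG1int hG2int hK'meas (fun x _ => ptwise ε _ _)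
  have e5 : (∫ p in Tri O A B', G2 p) = lam * h1sq w (Tri O A B') := by
    unfold h1sq
    exact integral_const_mul lam _
  have e6 : h1sq w' (Tri O A B) ≤ lam * h1sq w (Tri O A B') := by
    rw [e2]
    calc (∫ p in Tri O A B', G1 p) ≤ ∫ p in Tri O A B', G2 p := e4
    _ = lam * h1sq w (Tri O A B') := e5
  -- final chain
  unfold l2norm h1norm at hmain ⊢
  calc Real.sqrt (l2sq w (Tri O A B')) = Real.sqrt (l2sq w' (Tri O A B)) := by rw [e1]
  _ ≤ C * Real.sqrt (h1sq w' (Tri O A B)) := hmain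
  _ ≤ C * Real.sqrt (lam * h1sq w (Tri O A B')) :=
      mul_le_mul_of_nonneg_left (Real.sqrt_le_sqrt e6) hC
  _ = Real.sqrt lam * C * Real.sqrt (h1sq w (Tri O A B')) := by
      rw [Real.sqrt_mul hlam0]
      ring
end
end

section
/- Let α, ε ∈ ℝ with |α| ≤ 1/2 and |ε| ≤ 1/2. Set β = 1 + ε, γ = α² + β² + 1, f₁ = (γ − √(γ² − 4β²))/(2β), and f₂ = (γ² − 2β² + γ·√(γ² − 4β²))/(2β) (note γ² − 4β² ≥ 0 and f₁ > 0). Then √(f₂/f₁) ≤ 1 + (3/2)|α| + 2|ε| + (3/2)α² + ε² when ε ≥ 0, and √(f₂/f₁) ≤ 1 + (3/2)|α| + |ε| + (3/2)α² + 2ε² when ε ≤ 0. -/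
open MeasureTheory Real

noncomputable section

lemma certD1 (a e : ℝ) (ha0 : 0 ≤ a) (ha1 : a ≤ 1/2) (he0 : 0 ≤ e) (he1 : e ≤ 1/2) :
    (a^2+(1+e)^2+1)^2 - 4*(1+e)^2 ≤ ((a+e)*(2+e)+a^3/4)^2 := by
  have hu : (0:ℝ) ≤ 1/2 - a := by linarith
  have hv : (0:ℝ) ≤ 1/2 - e := by linarith
  nlinarith [mul_nonneg (mul_nonneg (pow_nonneg ha0 1) (pow_nonneg he0 1)) (mul_nonneg (pow_nonneg hu 0) (pow_nonneg hv 0)),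
    mul_nonneg (mul_nonneg (pow_nonneg ha0 1) (pow_nonneg he0 1)) (mul_nonneg (pow_nonneg hu 1) (pow_nonneg hv 0)),
    mul_nonneg (mul_nonneg (pow_nonneg ha0 1) (pow_nonneg he0 2)) (mul_nonneg (pow_nonneg hu 0) (pow_nonneg hv 0)),
    mul_nonneg (mul_nonneg (pow_nonneg ha0 1) (pow_nonneg he0 2)) (mul_nonneg (pow_nonneg hu 1) (pow_nonneg hv 0)),
    mul_nonneg (mul_nonneg (pow_nonneg ha0 1) (pow_nonneg he0 3)) (mul_nonneg (pow_nonneg hu 0) (pow_nonneg hv 0)),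
    mul_nonneg (mul_nonneg (pow_nonneg ha0 2) (pow_nonneg he0 1)) (mul_nonneg (pow_nonneg hu 1) (pow_nonneg hv 1)),
    mul_nonneg (mul_nonneg (pow_nonneg ha0 3) (pow_nonneg he0 1)) (mul_nonneg (pow_nonneg hu 0) (pow_nonneg hv 0)),
    mul_nonneg (mul_nonneg (pow_nonneg ha0 4) (pow_nonneg he0 1)) (mul_nonneg (pow_nonneg hu 0) (pow_nonneg hv 0)),
    mul_nonneg (mul_nonneg (pow_nonneg ha0 6) (pow_nonneg he0 0)) (mul_nonneg (pow_nonneg hu 0) (pow_nonneg hv 0))]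

lemma certG1 (a e : ℝ) (ha0 : 0 ≤ a) (ha1 : a ≤ 1/2) (he0 : 0 ≤ e) (he1 : e ≤ 1/2) :
    4*(a^2+(1+e)^2+1)^3 - 12*(a^2+(1+e)^2+1)*(1+e)^2 + 4*((a+e)*(2+e)+a^3/4)*((a^2+(1+e)^2+1)^2-(1+e)^2) ≤ 8*(1+e)^2*(1+3/2*a+2*e+3/2*a^2+e^2)^2 := by
  have hu : (0:ℝ) ≤ 1/2 - a := by linarith
  have hv : (0:ℝ) ≤ 1/2 - e := by linarith
  nlinarith [mul_nonneg (mul_nonneg (pow_nonneg ha0 1) (pow_nonneg he0 1)) (mul_nonneg (pow_nonneg hu 0) (pow_nonneg hv 0)),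
    mul_nonneg (mul_nonneg (pow_nonneg ha0 1) (pow_nonneg he0 1)) (mul_nonneg (pow_nonneg hu 1) (pow_nonneg hv 1)),
    mul_nonneg (mul_nonneg (pow_nonneg ha0 1) (pow_nonneg he0 2)) (mul_nonneg (pow_nonneg hu 0) (pow_nonneg hv 0)),
    mul_nonneg (mul_nonneg (pow_nonneg ha0 1) (pow_nonneg he0 2)) (mul_nonneg (pow_nonneg hu 1) (pow_nonneg hv 1)),
    mul_nonneg (mul_nonneg (pow_nonneg ha0 1) (pow_nonneg he0 3)) (mul_nonneg (pow_nonneg hu 0) (pow_nonneg hv 0)),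
    mul_nonneg (mul_nonneg (pow_nonneg ha0 1) (pow_nonneg he0 3)) (mul_nonneg (pow_nonneg hu 0) (pow_nonneg hv 1)),
    mul_nonneg (mul_nonneg (pow_nonneg ha0 1) (pow_nonneg he0 3)) (mul_nonneg (pow_nonneg hu 1) (pow_nonneg hv 1)),
    mul_nonneg (mul_nonneg (pow_nonneg ha0 1) (pow_nonneg he0 4)) (mul_nonneg (pow_nonneg hu 0) (pow_nonneg hv 1)),
    mul_nonneg (mul_nonneg (pow_nonneg ha0 2) (pow_nonneg he0 0)) (mul_nonneg (pow_nonneg hu 0) (pow_nonneg hv 0)),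
    mul_nonneg (mul_nonneg (pow_nonneg ha0 2) (pow_nonneg he0 0)) (mul_nonneg (pow_nonneg hu 1) (pow_nonneg hv 1)),
    mul_nonneg (mul_nonneg (pow_nonneg ha0 2) (pow_nonneg he0 1)) (mul_nonneg (pow_nonneg hu 0) (pow_nonneg hv 0)),
    mul_nonneg (mul_nonneg (pow_nonneg ha0 2) (pow_nonneg he0 2)) (mul_nonneg (pow_nonneg hu 1) (pow_nonneg hv 0)),
    mul_nonneg (mul_nonneg (pow_nonneg ha0 2) (pow_nonneg he0 3)) (mul_nonneg (pow_nonneg hu 1) (pow_nonneg hv 0)),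
    mul_nonneg (mul_nonneg (pow_nonneg ha0 2) (pow_nonneg he0 4)) (mul_nonneg (pow_nonneg hu 1) (pow_nonneg hv 0)),
    mul_nonneg (mul_nonneg (pow_nonneg ha0 3) (pow_nonneg he0 0)) (mul_nonneg (pow_nonneg hu 0) (pow_nonneg hv 0)),
    mul_nonneg (mul_nonneg (pow_nonneg ha0 3) (pow_nonneg he0 0)) (mul_nonneg (pow_nonneg hu 1) (pow_nonneg hv 0)),
    mul_nonneg (mul_nonneg (pow_nonneg ha0 3) (pow_nonneg he0 0)) (mul_nonneg (pow_nonneg hu 1) (pow_nonneg hv 1)),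
    mul_nonneg (mul_nonneg (pow_nonneg ha0 3) (pow_nonneg he0 1)) (mul_nonneg (pow_nonneg hu 1) (pow_nonneg hv 1)),
    mul_nonneg (mul_nonneg (pow_nonneg ha0 4) (pow_nonneg he0 0)) (mul_nonneg (pow_nonneg hu 1) (pow_nonneg hv 0)),
    mul_nonneg (mul_nonneg (pow_nonneg ha0 4) (pow_nonneg he0 1)) (mul_nonneg (pow_nonneg hu 1) (pow_nonneg hv 0)),
    mul_nonneg (mul_nonneg (pow_nonneg ha0 4) (pow_nonneg he0 2)) (mul_nonneg (pow_nonneg hu 1) (pow_nonneg hv 0)),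
    mul_nonneg (mul_nonneg (pow_nonneg ha0 5) (pow_nonneg he0 0)) (mul_nonneg (pow_nonneg hu 1) (pow_nonneg hv 0)),
    mul_nonneg (mul_nonneg (pow_nonneg ha0 6) (pow_nonneg he0 0)) (mul_nonneg (pow_nonneg hu 1) (pow_nonneg hv 0))]

lemma certD2 (a e : ℝ) (ha0 : 0 ≤ a) (ha1 : a ≤ 1/2) (he0 : 0 ≤ e) (he1 : e ≤ 1/2) :
    (a^2+(1-e)^2+1)^2 - 4*(1-e)^2 ≤ ((a+e)*(2-e)-a*e+a^3/4)^2 := by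
  have hu : (0:ℝ) ≤ 1/2 - a := by linarith
  have hv : (0:ℝ) ≤ 1/2 - e := by linarith
  nlinarith [mul_nonneg (mul_nonneg (pow_nonneg ha0 1) (pow_nonneg he0 1)) (mul_nonneg (pow_nonneg hu 0) (pow_nonneg hv 0)),
    mul_nonneg (mul_nonneg (pow_nonneg ha0 1) (pow_nonneg he0 1)) (mul_nonneg (pow_nonneg hu 0) (pow_nonneg hv 1)),
    mul_nonneg (mul_nonneg (pow_nonneg ha0 1) (pow_nonneg he0 1)) (mul_nonneg (pow_nonneg hu 1) (pow_nonneg hv 0)),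
    mul_nonneg (mul_nonneg (pow_nonneg ha0 1) (pow_nonneg he0 1)) (mul_nonneg (pow_nonneg hu 1) (pow_nonneg hv 1)),
    mul_nonneg (mul_nonneg (pow_nonneg ha0 1) (pow_nonneg he0 3)) (mul_nonneg (pow_nonneg hu 0) (pow_nonneg hv 0)),
    mul_nonneg (mul_nonneg (pow_nonneg ha0 2) (pow_nonneg he0 2)) (mul_nonneg (pow_nonneg hu 1) (pow_nonneg hv 0)),
    mul_nonneg (mul_nonneg (pow_nonneg ha0 3) (pow_nonneg he0 1)) (mul_nonneg (pow_nonneg hu 0) (pow_nonneg hv 0)),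
    mul_nonneg (mul_nonneg (pow_nonneg ha0 3) (pow_nonneg he0 1)) (mul_nonneg (pow_nonneg hu 1) (pow_nonneg hv 0)),
    mul_nonneg (mul_nonneg (pow_nonneg ha0 6) (pow_nonneg he0 0)) (mul_nonneg (pow_nonneg hu 0) (pow_nonneg hv 0))]

lemma certG2 (a e : ℝ) (ha0 : 0 ≤ a) (ha1 : a ≤ 1/2) (he0 : 0 ≤ e) (he1 : e ≤ 1/2) :
    4*(a^2+(1-e)^2+1)^3 - 12*(a^2+(1-e)^2+1)*(1-e)^2 + 4*((a+e)*(2-e)-a*e+a^3/4)*((a^2+(1-e)^2+1)^2-(1-e)^2) ≤ 8*(1-e)^2*(1+3/2*a+e+3/2*a^2+2*e^2)^2 := by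
  have hu : (0:ℝ) ≤ 1/2 - a := by linarith
  have hv : (0:ℝ) ≤ 1/2 - e := by linarith
  nlinarith [mul_nonneg (mul_nonneg (pow_nonneg ha0 0) (pow_nonneg he0 2)) (mul_nonneg (pow_nonneg hu 0) (pow_nonneg hv 1)),
    mul_nonneg (mul_nonneg (pow_nonneg ha0 0) (pow_nonneg he0 2)) (mul_nonneg (pow_nonneg hu 0) (pow_nonneg hv 2)),
    mul_nonneg (mul_nonneg (pow_nonneg ha0 0) (pow_nonneg he0 2)) (mul_nonneg (pow_nonneg hu 2) (pow_nonneg hv 2)),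
    mul_nonneg (mul_nonneg (pow_nonneg ha0 0) (pow_nonneg he0 3)) (mul_nonneg (pow_nonneg hu 0) (pow_nonneg hv 2)),
    mul_nonneg (mul_nonneg (pow_nonneg ha0 0) (pow_nonneg he0 3)) (mul_nonneg (pow_nonneg hu 1) (pow_nonneg hv 1)),
    mul_nonneg (mul_nonneg (pow_nonneg ha0 0) (pow_nonneg he0 4)) (mul_nonneg (pow_nonneg hu 0) (pow_nonneg hv 2)),
    mul_nonneg (mul_nonneg (pow_nonneg ha0 0) (pow_nonneg he0 4)) (mul_nonneg (pow_nonneg hu 1) (pow_nonneg hv 1)),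
    mul_nonneg (mul_nonneg (pow_nonneg ha0 1) (pow_nonneg he0 1)) (mul_nonneg (pow_nonneg hu 0) (pow_nonneg hv 1)),
    mul_nonneg (mul_nonneg (pow_nonneg ha0 1) (pow_nonneg he0 1)) (mul_nonneg (pow_nonneg hu 1) (pow_nonneg hv 0)),
    mul_nonneg (mul_nonneg (pow_nonneg ha0 1) (pow_nonneg he0 1)) (mul_nonneg (pow_nonneg hu 2) (pow_nonneg hv 2)),
    mul_nonneg (mul_nonneg (pow_nonneg ha0 1) (pow_nonneg he0 2)) (mul_nonneg (pow_nonneg hu 0) (pow_nonneg hv 1)),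
    mul_nonneg (mul_nonneg (pow_nonneg ha0 1) (pow_nonneg he0 2)) (mul_nonneg (pow_nonneg hu 1) (pow_nonneg hv 0)),
    mul_nonneg (mul_nonneg (pow_nonneg ha0 1) (pow_nonneg he0 2)) (mul_nonneg (pow_nonneg hu 1) (pow_nonneg hv 1)),
    mul_nonneg (mul_nonneg (pow_nonneg ha0 1) (pow_nonneg he0 3)) (mul_nonneg (pow_nonneg hu 2) (pow_nonneg hv 0)),
    mul_nonneg (mul_nonneg (pow_nonneg ha0 1) (pow_nonneg he0 3)) (mul_nonneg (pow_nonneg hu 2) (pow_nonneg hv 1)),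
    mul_nonneg (mul_nonneg (pow_nonneg ha0 2) (pow_nonneg he0 0)) (mul_nonneg (pow_nonneg hu 0) (pow_nonneg hv 0)),
    mul_nonneg (mul_nonneg (pow_nonneg ha0 2) (pow_nonneg he0 0)) (mul_nonneg (pow_nonneg hu 0) (pow_nonneg hv 1)),
    mul_nonneg (mul_nonneg (pow_nonneg ha0 2) (pow_nonneg he0 0)) (mul_nonneg (pow_nonneg hu 1) (pow_nonneg hv 0)),
    mul_nonneg (mul_nonneg (pow_nonneg ha0 2) (pow_nonneg he0 0)) (mul_nonneg (pow_nonneg hu 2) (pow_nonneg hv 2)),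
    mul_nonneg (mul_nonneg (pow_nonneg ha0 2) (pow_nonneg he0 1)) (mul_nonneg (pow_nonneg hu 1) (pow_nonneg hv 0)),
    mul_nonneg (mul_nonneg (pow_nonneg ha0 3) (pow_nonneg he0 0)) (mul_nonneg (pow_nonneg hu 1) (pow_nonneg hv 0)),
    mul_nonneg (mul_nonneg (pow_nonneg ha0 3) (pow_nonneg he0 1)) (mul_nonneg (pow_nonneg hu 2) (pow_nonneg hv 0)),
    mul_nonneg (mul_nonneg (pow_nonneg ha0 3) (pow_nonneg he0 1)) (mul_nonneg (pow_nonneg hu 2) (pow_nonneg hv 1)),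
    mul_nonneg (mul_nonneg (pow_nonneg ha0 4) (pow_nonneg he0 0)) (mul_nonneg (pow_nonneg hu 1) (pow_nonneg hv 0)),
    mul_nonneg (mul_nonneg (pow_nonneg ha0 5) (pow_nonneg he0 0)) (mul_nonneg (pow_nonneg hu 1) (pow_nonneg hv 0)),
    mul_nonneg (mul_nonneg (pow_nonneg ha0 6) (pow_nonneg he0 0)) (mul_nonneg (pow_nonneg hu 1) (pow_nonneg hv 0))]


set_option maxHeartbeats 3200000 in
/-- with `β = 1 + ε`, `γ = α² + β² + 1`,
`f₁ = (γ − √(γ²−4β²))/(2β)` and `f₂ = (γ² − 2β² + γ√(γ²−4β²))/(2β)`, for `|α|,|ε| ≤ 1/2`: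
`√(f₂/f₁) ≤ 1 + (3/2)|α| + 2|ε| + (3/2)α² + ε²` if `ε ≥ 0`, and
`√(f₂/f₁) ≤ 1 + (3/2)|α| + |ε| + (3/2)α² + 2ε²` if `ε ≤ 0`. -/
theorem stmt_19 (α ε : ℝ) (hα : |α| ≤ 1 / 2) (hε : |ε| ≤ 1 / 2)
    (β γ f₁ f₂ : ℝ) (hβ : β = 1 + ε) (hγ : γ = α ^ 2 + β ^ 2 + 1)
    (hf₁ : f₁ = (γ - Real.sqrt (γ ^ 2 - 4 * β ^ 2)) / (2 * β))
    (hf₂ : f₂ = (γ ^ 2 - 2 * β ^ 2 + γ * Real.sqrt (γ ^ 2 - 4 * β ^ 2)) / (2 * β)) :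
    (0 ≤ ε → Real.sqrt (f₂ / f₁) ≤ 1 + 3 / 2 * |α| + 2 * |ε| + 3 / 2 * α ^ 2 + ε ^ 2) ∧
    (ε ≤ 0 → Real.sqrt (f₂ / f₁) ≤ 1 + 3 / 2 * |α| + |ε| + 3 / 2 * α ^ 2 + 2 * ε ^ 2) := by
  have hα' := abs_le.mp hα
  have hε' := abs_le.mp hε
  have ha0 : (0:ℝ) ≤ |α| := abs_nonneg α
  have ha2 : |α| ^ 2 = α ^ 2 := sq_abs α
  have hβpos : 0 < β := by rw [hβ]; linarith [hε'.1]
  have hγalt : γ = 2 * β + (α ^ 2 + ε ^ 2) := by rw [hγ, hβ]; ring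
  have hq0 : (0:ℝ) ≤ α ^ 2 + ε ^ 2 := by positivity
  have h4 : 0 ≤ γ ^ 2 - 4 * β ^ 2 := by
    have h := mul_nonneg hq0 (by nlinarith : (0:ℝ) ≤ α ^ 2 + ε ^ 2 + 4 * β)
    rw [hγalt]; nlinarith [h]
  set s := Real.sqrt (γ ^ 2 - 4 * β ^ 2) with hsdef
  have hs0 : 0 ≤ s := Real.sqrt_nonneg _
  have hs2 : s ^ 2 = γ ^ 2 - 4 * β ^ 2 := Real.sq_sqrt h4
  have hγpos : 0 < γ := by rw [hγ]; positivity
  have hsγ : s < γ := by nlinarith [hs2, hs0, hγpos, mul_pos hβpos hβpos]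
  have hγβ : 0 ≤ γ ^ 2 - β ^ 2 := by
    have h1 : 0 ≤ γ - β := by linarith [hγalt, hq0, hβpos]
    have h2 : 0 ≤ γ + β := by linarith
    nlinarith [mul_nonneg h1 h2]
  have hf1pos : 0 < f₁ := by
    rw [hf₁]; apply div_pos <;> linarith
  have hβne : β ≠ 0 := ne_of_gt hβpos
  have main : ∀ R : ℝ, 0 ≤ R → (γ + s) ^ 3 ≤ 8 * β ^ 2 * R ^ 2 →
      Real.sqrt (f₂ / f₁) ≤ R := by
    intro R hR0 hcube
    have hident : (γ ^ 2 - 2 * β ^ 2 + γ * s) * (8 * β ^ 2) = (γ + s) ^ 3 * (γ - s) := by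
      linear_combination (s ^ 2 + 2 * γ * s + γ ^ 2 - 4 * β ^ 2) * hs2
    have hmul := mul_le_mul_of_nonneg_right hcube (by linarith : (0:ℝ) ≤ γ - s)
    have hkey : γ ^ 2 - 2 * β ^ 2 + γ * s ≤ R ^ 2 * (γ - s) := by
      have h8 : (0:ℝ) < 8 * β ^ 2 := by positivity
      have hX : (γ ^ 2 - 2 * β ^ 2 + γ * s) * (8 * β ^ 2)
          ≤ (R ^ 2 * (γ - s)) * (8 * β ^ 2) := by
        rw [hident]; linarith [hmul]
      exact le_of_mul_le_mul_right hX h8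
    have hf21 : f₂ / f₁ ≤ R ^ 2 := by
      rw [div_le_iff₀ hf1pos, hf₁, hf₂]
      have h2β : (0:ℝ) < 2 * β := by linarith
      rw [div_le_iff₀ h2β]
      have heq : R ^ 2 * ((γ - s) / (2 * β)) * (2 * β) = R ^ 2 * (γ - s) := by
        field_simp
      rw [heq]; exact hkey
    calc Real.sqrt (f₂ / f₁) ≤ Real.sqrt (R ^ 2) := Real.sqrt_le_sqrt hf21
      _ = R := Real.sqrt_sq hR0
  have hcube_id : (γ + s) ^ 3 = 4 * γ ^ 3 - 12 * γ * β ^ 2 + 4 * s * (γ ^ 2 - β ^ 2) := by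
    linear_combination (3 * γ + s) * hs2
  constructor
  · intro he0
    have heabs : |ε| = ε := abs_of_nonneg he0
    rw [heabs]
    have hR0 : (0:ℝ) ≤ 1 + 3 / 2 * |α| + 2 * ε + 3 / 2 * α ^ 2 + ε ^ 2 := by
      nlinarith [ha0, sq_nonneg α, sq_nonneg ε]
    refine main _ hR0 ?_
    have hp0 : (0:ℝ) ≤ (|α| + ε) * (2 + ε) + |α| ^ 3 / 4 := by
      have h1 := mul_nonneg (add_nonneg ha0 he0) (by linarith : (0:ℝ) ≤ 2 + ε)
      linarith [pow_nonneg ha0 3]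
    have hD : γ ^ 2 - 4 * β ^ 2 ≤ ((|α| + ε) * (2 + ε) + |α| ^ 3 / 4) ^ 2 := by
      have h := certD1 |α| ε ha0 hα he0 hε'.2
      rw [hγ, hβ, ← ha2]; linarith [h]
    have hsp : s ≤ (|α| + ε) * (2 + ε) + |α| ^ 3 / 4 := by
      have h2 := Real.sqrt_le_sqrt hD
      rw [Real.sqrt_sq hp0] at h2
      rw [hsdef]; exact h2
    have hG : 4 * γ ^ 3 - 12 * γ * β ^ 2
        + 4 * ((|α| + ε) * (2 + ε) + |α| ^ 3 / 4) * (γ ^ 2 - β ^ 2)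
        ≤ 8 * β ^ 2 * (1 + 3 / 2 * |α| + 2 * ε + 3 / 2 * α ^ 2 + ε ^ 2) ^ 2 := by
      have h := certG1 |α| ε ha0 hα he0 hε'.2
      rw [hγ, hβ, ← ha2]; linarith [h]
    calc (γ + s) ^ 3 = 4 * γ ^ 3 - 12 * γ * β ^ 2 + 4 * s * (γ ^ 2 - β ^ 2) := hcube_id
      _ ≤ 4 * γ ^ 3 - 12 * γ * β ^ 2
          + 4 * ((|α| + ε) * (2 + ε) + |α| ^ 3 / 4) * (γ ^ 2 - β ^ 2) := by
        linarith [mul_nonneg (sub_nonneg.mpr hsp) hγβ]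
      _ ≤ 8 * β ^ 2 * (1 + 3 / 2 * |α| + 2 * ε + 3 / 2 * α ^ 2 + ε ^ 2) ^ 2 := hG
  · intro he0
    have heabs : |ε| = -ε := abs_of_nonpos he0
    rw [heabs]
    have hne0 : (0:ℝ) ≤ -ε := by linarith
    have hne2 : -ε ≤ 1 / 2 := by linarith [hε'.1]
    have hR0 : (0:ℝ) ≤ 1 + 3 / 2 * |α| + -ε + 3 / 2 * α ^ 2 + 2 * ε ^ 2 := by
      nlinarith [ha0, sq_nonneg α, sq_nonneg ε]
    refine main _ hR0 ?_
    have hp0 : (0:ℝ) ≤ (|α| + -ε) * (2 - -ε) - |α| * -ε + |α| ^ 3 / 4 := by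
      have h1 := mul_nonneg ha0 (by linarith : (0:ℝ) ≤ 1 - -ε)
      have h2 := mul_nonneg hne0 (by linarith : (0:ℝ) ≤ 2 - -ε)
      nlinarith [pow_nonneg ha0 3]
    have hD : γ ^ 2 - 4 * β ^ 2
        ≤ ((|α| + -ε) * (2 - -ε) - |α| * -ε + |α| ^ 3 / 4) ^ 2 := by
      have h := certD2 |α| (-ε) ha0 hα hne0 hne2
      rw [hγ, hβ, ← ha2]; linarith [h]
    have hsp : s ≤ (|α| + -ε) * (2 - -ε) - |α| * -ε + |α| ^ 3 / 4 := by
      have h2 := Real.sqrt_le_sqrt hD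
      rw [Real.sqrt_sq hp0] at h2
      rw [hsdef]; exact h2
    have hG : 4 * γ ^ 3 - 12 * γ * β ^ 2
        + 4 * ((|α| + -ε) * (2 - -ε) - |α| * -ε + |α| ^ 3 / 4) * (γ ^ 2 - β ^ 2)
        ≤ 8 * β ^ 2 * (1 + 3 / 2 * |α| + -ε + 3 / 2 * α ^ 2 + 2 * ε ^ 2) ^ 2 := by
      have h := certG2 |α| (-ε) ha0 hα hne0 hne2
      rw [hγ, hβ, ← ha2]; linarith [h]
    calc (γ + s) ^ 3 = 4 * γ ^ 3 - 12 * γ * β ^ 2 + 4 * s * (γ ^ 2 - β ^ 2) := hcube_id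
      _ ≤ 4 * γ ^ 3 - 12 * γ * β ^ 2
          + 4 * ((|α| + -ε) * (2 - -ε) - |α| * -ε + |α| ^ 3 / 4) * (γ ^ 2 - β ^ 2) := by
        linarith [mul_nonneg (sub_nonneg.mpr hsp) hγβ]
      _ ≤ 8 * β ^ 2 * (1 + 3 / 2 * |α| + -ε + 3 / 2 * α ^ 2 + 2 * ε ^ 2) ^ 2 := hG
end
end
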